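/- arXiv:1709.02851 — 5 statements merged into one kernel-verified Lean document; each statement's English description precedes it below -/
import Mathlib

section
/- Let 1 < q < 2, let X be a compact subset of ℂ, let x₀ ∈ ℂ, let k : ℂ → ℂ vanish off X and belong to L^q(X, dA), and let 0 < δ₀ < 1. Let E be the set of all x ∈ ℂ satisfying both (1) ∫_X |x − x₀|^q |k(z)|^q / |z − x|^q dA_z < δ₀ and (2) |x − x₀| · ∫_X |k(z)| / |z − x| dA_z < δ₀. Then E has full area density at x₀. -/
open MeasureTheory Metric Filter

noncomputable section

/-- `E` has full area density at `w` if `m(B(w,1/n) \ E) / m(B(w,1/n)) → 0` as `n → ∞`,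
where `m` is 2-dimensional Lebesgue (area) measure. -/
def FullAreaDensityAt (E : Set ℂ) (w : ℂ) : Prop :=
  Tendsto (fun n : ℕ => volume (ball w (1 / (n : ℝ)) \ E) / volume (ball w (1 / (n : ℝ))))
    atTop (nhds 0)

open Set Function
open scoped ENNReal NNReal Topology

namespace ExAux

def C (s : ℝ) : ℝ≥0∞ :=
  ENNReal.ofReal ((2:ℝ) ^ s) * (1 - ENNReal.ofReal ((2:ℝ) ^ (s - 2)))⁻¹ * (NNReal.pi : ℝ≥0∞)

lemma sub_ne_zero' {s : ℝ} (hs2 : s < 2) :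
    (1 - ENNReal.ofReal ((2:ℝ) ^ (s - 2))) ≠ 0 := by
  have h1 : (2:ℝ) ^ (s - 2) < 1 :=
    Real.rpow_lt_one_of_one_lt_of_neg one_lt_two (by linarith)
  have : ENNReal.ofReal ((2:ℝ) ^ (s - 2)) < 1 := by
    rw [ENNReal.ofReal_lt_one]; exact h1
  exact (tsub_pos_iff_lt.mpr this).ne'

lemma C_ne_top {s : ℝ} (hs2 : s < 2) : C s ≠ ∞ := by
  refine ENNReal.mul_ne_top (ENNReal.mul_ne_top ENNReal.ofReal_ne_top ?_) ENNReal.coe_ne_top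
  exact ENNReal.inv_ne_top.mpr (sub_ne_zero' hs2)

lemma radial {s : ℝ} (hs0 : 0 < s) (hs2 : s < 2) {r : ℝ} (hr : 0 < r) (z : ℂ) :
    (∫⁻ x in ball z r, ENNReal.ofReal (1 / ‖x - z‖ ^ s)) ≤
      C s * ENNReal.ofReal (r ^ (2 - s)) := by
  set f : ℂ → ℝ≥0∞ := fun x => ENNReal.ofReal (1 / ‖x - z‖ ^ s) with hf
  set d : ℕ → ℝ := fun j => r * (2⁻¹ : ℝ) ^ j with hd
  have hdpos : ∀ j, 0 < d j := fun j => mul_pos hr (by positivity)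
  have hdsucc : ∀ j, d (j + 1) = d j / 2 := by
    intro j; simp only [hd, pow_succ]; ring
  set A : ℕ → Set ℂ := fun j => ball z (d j) \ ball z (d (j + 1)) with hA
  have hAm : ∀ j, MeasurableSet (A j) := fun j =>
    measurableSet_ball.diff measurableSet_ball
  -- subset of union of annuli
  have hsub : ball z r \ {z} ⊆ ⋃ j, A j := by
    rintro x ⟨hx1, hx2⟩
    have hdist : 0 < dist x z := dist_pos.mpr (by simpa using hx2)
    have hex : ∃ j, d (j + 1) ≤ dist x z := by
      have htend : Tendsto d atTop (𝓝 0) := by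
        have := tendsto_pow_atTop_nhds_zero_of_lt_one (by norm_num : (0:ℝ) ≤ 2⁻¹)
          (by norm_num : (2⁻¹:ℝ) < 1)
        simpa [hd] using this.const_mul r
      obtain ⟨j, hj⟩ := (htend.eventually_lt_const hdist).exists
      exact ⟨j, by rw [hdsucc]; nlinarith [hdpos j]⟩
    classical
    set j₀ := Nat.find hex with hj₀
    have hle : d (j₀ + 1) ≤ dist x z := Nat.find_spec hex
    have hlt : dist x z < d j₀ := by
      rcases Nat.eq_zero_or_pos j₀ with h0 | hpos
      · rw [h0]; simpa [hd] using hx1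
      · have := Nat.find_min hex (m := j₀ - 1) (by omega)
        push_neg at this
        have : dist x z < d (j₀ - 1 + 1) := this
        rwa [Nat.sub_add_cancel hpos] at this
    exact mem_iUnion.mpr ⟨j₀, ⟨mem_ball.mpr hlt, fun h => absurd (mem_ball.mp h) (not_lt.mpr hle)⟩⟩
  -- reduce to annuli
  have step1 : (∫⁻ x in ball z r, f x) ≤ ∑' j, ∫⁻ x in A j, f x := by
    have h0 : (∫⁻ x in ({z} : Set ℂ), f x) = 0 := by
      apply setLIntegral_measure_zero
      have : ({z} : Set ℂ) = closedBall z 0 := by simp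
      rw [this, Complex.volume_closedBall]; simp
    calc (∫⁻ x in ball z r, f x)
        ≤ ∫⁻ x in (ball z r \ {z}) ∪ {z}, f x :=
          lintegral_mono_set (fun x hx => by
            by_cases h : x = z
            · exact Or.inr (by simp [h])
            · exact Or.inl ⟨hx, by simp [h]⟩)
      _ ≤ (∫⁻ x in ball z r \ {z}, f x) + ∫⁻ x in ({z} : Set ℂ), f x :=
          lintegral_union_le _ _ _
      _ = ∫⁻ x in ball z r \ {z}, f x := by rw [h0, add_zero]
      _ ≤ ∫⁻ x in ⋃ j, A j, f x := lintegral_mono_set hsub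
      _ ≤ ∑' j, ∫⁻ x in A j, f x := lintegral_iUnion_le _ _
  -- key real identity
  have key : ∀ j : ℕ, (1 / d (j + 1) ^ s) * (d j ^ 2) =
      (2:ℝ) ^ s * ((2:ℝ) ^ (s - 2)) ^ j * r ^ (2 - s) := by
    intro j
    have hdj := hdpos j
    have h2s : (0:ℝ) < (2:ℝ) ^ s := Real.rpow_pos_of_pos two_pos s
    have hds : (0:ℝ) < d j ^ s := Real.rpow_pos_of_pos hdj s
    rw [hdsucc, Real.div_rpow hdj.le (by norm_num : (0:ℝ) ≤ 2)]
    have e1 : 1 / (d j ^ s / (2:ℝ) ^ s) * (d j ^ 2) = (2:ℝ) ^ s * (d j ^ (2:ℕ) / d j ^ s) := by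
      field_simp
    rw [e1]
    have e2 : (d j : ℝ) ^ (2:ℕ) / d j ^ s = d j ^ (2 - s) := by
      rw [← Real.rpow_natCast (d j) 2, ← Real.rpow_sub hdj]
      norm_num
    rw [e2]
    have e3 : d j ^ (2 - s) = r ^ (2 - s) * (((2:ℝ) ^ (s - 2)) ^ j) := by
      rw [hd]
      simp only
      rw [Real.mul_rpow hr.le (by positivity), ← Real.rpow_natCast (2⁻¹ : ℝ) j,
        ← Real.rpow_mul (by norm_num : (0:ℝ) ≤ 2⁻¹), mul_comm (j:ℝ) (2 - s),
        Real.rpow_mul (by norm_num : (0:ℝ) ≤ 2⁻¹), Real.rpow_natCast,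
        Real.inv_rpow (by norm_num : (0:ℝ) ≤ 2), ← Real.rpow_neg (by norm_num : (0:ℝ) ≤ 2),
        neg_sub]
    rw [e3]; ring
  -- per-annulus bound
  have step2 : ∀ j : ℕ, (∫⁻ x in A j, f x) ≤
      ENNReal.ofReal ((2:ℝ) ^ s) * ENNReal.ofReal (((2:ℝ) ^ (s - 2)) ^ j) *
        ENNReal.ofReal (r ^ (2 - s)) * (NNReal.pi : ℝ≥0∞) := by
    intro j
    have hdj1 := hdpos (j + 1)
    have hb : ∀ x ∈ A j, f x ≤ ENNReal.ofReal (1 / d (j + 1) ^ s) := by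
      intro x hx
      apply ENNReal.ofReal_le_ofReal
      have hxz : d (j + 1) ≤ ‖x - z‖ := by
        have := hx.2
        rw [mem_ball, not_lt] at this
        rwa [← dist_eq_norm]
      have h1 : d (j + 1) ^ s ≤ ‖x - z‖ ^ s := Real.rpow_le_rpow hdj1.le hxz hs0.le
      apply one_div_le_one_div_of_le (Real.rpow_pos_of_pos hdj1 s) h1
    calc (∫⁻ x in A j, f x)
        ≤ ∫⁻ _ in A j, ENNReal.ofReal (1 / d (j + 1) ^ s) := setLIntegral_mono' (hAm j) hb
      _ = ENNReal.ofReal (1 / d (j + 1) ^ s) * volume (A j) := setLIntegral_const _ _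
      _ ≤ ENNReal.ofReal (1 / d (j + 1) ^ s) * volume (ball z (d j)) :=
          mul_le_mul_right (measure_mono diff_subset) _
      _ = ENNReal.ofReal (1 / d (j + 1) ^ s) * (ENNReal.ofReal (d j ^ 2) * (NNReal.pi : ℝ≥0∞)) := by
          rw [Complex.volume_ball, ← ENNReal.ofReal_pow (hdpos j).le]
      _ = ENNReal.ofReal ((1 / d (j + 1) ^ s) * (d j ^ 2)) * (NNReal.pi : ℝ≥0∞) := by
          rw [← mul_assoc, ← ENNReal.ofReal_mul (by positivity)]
      _ = ENNReal.ofReal ((2:ℝ) ^ s * ((2:ℝ) ^ (s - 2)) ^ j * r ^ (2 - s)) * (NNReal.pi : ℝ≥0∞) := by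
          rw [key j]
      _ = ENNReal.ofReal ((2:ℝ) ^ s) * ENNReal.ofReal (((2:ℝ) ^ (s - 2)) ^ j) *
            ENNReal.ofReal (r ^ (2 - s)) * (NNReal.pi : ℝ≥0∞) := by
          rw [ENNReal.ofReal_mul (by positivity), ENNReal.ofReal_mul (by positivity)]
  -- sum up
  refine step1.trans ?_
  calc (∑' j, ∫⁻ x in A j, f x)
      ≤ ∑' j : ℕ, ENNReal.ofReal ((2:ℝ) ^ s) * ENNReal.ofReal (((2:ℝ) ^ (s - 2)) ^ j) *
          ENNReal.ofReal (r ^ (2 - s)) * (NNReal.pi : ℝ≥0∞) := ENNReal.tsum_le_tsum step2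
    _ = ∑' j : ℕ, (ENNReal.ofReal ((2:ℝ) ^ s) * ENNReal.ofReal (r ^ (2 - s)) *
          (NNReal.pi : ℝ≥0∞)) * (ENNReal.ofReal ((2:ℝ) ^ (s - 2))) ^ j := by
        congr 1; funext j
        rw [ENNReal.ofReal_pow (by positivity)]
        ring
    _ = (ENNReal.ofReal ((2:ℝ) ^ s) * ENNReal.ofReal (r ^ (2 - s)) * (NNReal.pi : ℝ≥0∞)) *
          (1 - ENNReal.ofReal ((2:ℝ) ^ (s - 2)))⁻¹ := by
        rw [ENNReal.tsum_mul_left, ENNReal.tsum_geometric]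
    _ = C s * ENNReal.ofReal (r ^ (2 - s)) := by
        rw [C]; ring


lemma ball_bound {s : ℝ} (hs0 : 0 < s) (hs2 : s < 2) {r : ℝ} (hr : 0 < r) (y z : ℂ) :
    (∫⁻ x in ball y r, ENNReal.ofReal (1 / ‖z - x‖ ^ s)) ≤
      (C s + (NNReal.pi : ℝ≥0∞)) * ENNReal.ofReal (r ^ (2 - s)) := by
  have hnorm : ∀ x : ℂ, ‖z - x‖ = ‖x - z‖ := fun x => norm_sub_rev _ _
  have hsplit : (ball y r : Set ℂ) = (ball y r ∩ ball z r) ∪ (ball y r \ ball z r) :=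
    (inter_union_diff _ _).symm
  rw [hsplit]
  refine le_trans (lintegral_union_le _ _ _) ?_
  rw [add_mul]
  gcongr
  · -- near part
    refine le_trans (lintegral_mono_set inter_subset_right) ?_
    refine le_trans (le_of_eq ?_) (radial hs0 hs2 hr z)
    exact setLIntegral_congr_fun measurableSet_ball
      (fun x _ => by rw [hnorm])
  · -- far part
    have hb : ∀ x ∈ ball y r \ ball z r,
        ENNReal.ofReal (1 / ‖z - x‖ ^ s) ≤ ENNReal.ofReal (1 / r ^ s) := by
      intro x hx
      apply ENNReal.ofReal_le_ofReal
      have hxz : r ≤ ‖z - x‖ := by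
        have := hx.2
        rw [mem_ball, not_lt] at this
        rw [hnorm, ← dist_eq_norm]; exact this
      exact one_div_le_one_div_of_le (Real.rpow_pos_of_pos hr s)
        (Real.rpow_le_rpow hr.le hxz hs0.le)
    calc (∫⁻ x in ball y r \ ball z r, ENNReal.ofReal (1 / ‖z - x‖ ^ s))
        ≤ ∫⁻ _ in ball y r \ ball z r, ENNReal.ofReal (1 / r ^ s) :=
          setLIntegral_mono' (measurableSet_ball.diff measurableSet_ball) hb
      _ = ENNReal.ofReal (1 / r ^ s) * volume (ball y r \ ball z r) := setLIntegral_const _ _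
      _ ≤ ENNReal.ofReal (1 / r ^ s) * volume (ball y r) :=
          mul_le_mul_right (measure_mono diff_subset) _
      _ = ENNReal.ofReal (1 / r ^ s) * (ENNReal.ofReal (r ^ 2) * (NNReal.pi : ℝ≥0∞)) := by
          rw [Complex.volume_ball, ← ENNReal.ofReal_pow hr.le]
      _ = ENNReal.ofReal ((1 / r ^ s) * r ^ 2) * (NNReal.pi : ℝ≥0∞) := by
          rw [← mul_assoc, ← ENNReal.ofReal_mul (by positivity)]
      _ = (NNReal.pi : ℝ≥0∞) * ENNReal.ofReal (r ^ (2 - s)) := by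
          rw [mul_comm]
          congr 1
          rw [Real.rpow_sub hr, Real.rpow_two, one_div_mul_eq_div]


lemma kernel_meas {s : ℝ} (hs0 : 0 < s) :
    Measurable fun p : ℂ × ℂ => ENNReal.ofReal (1 / ‖p.2 - p.1‖ ^ s) := by
  apply ENNReal.measurable_ofReal.comp
  have h1 : Continuous fun p : ℂ × ℂ => ‖p.2 - p.1‖ := (continuous_snd.sub continuous_fst).norm
  exact measurable_const.div ((Real.continuous_rpow_const hs0.le).comp h1).measurable

lemma fubini_bound {s : ℝ} (hs0 : 0 < s) (hs2 : s < 2) {r : ℝ} (hr : 0 < r) (y : ℂ)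
    {A : Set ℂ} {w : ℂ → ℝ≥0∞} (hw : Measurable w) :
    (∫⁻ x in ball y r, ∫⁻ z in A, w z * ENNReal.ofReal (1 / ‖z - x‖ ^ s)) ≤
      (∫⁻ z in A, w z) * ((C s + (NNReal.pi : ℝ≥0∞)) * ENNReal.ofReal (r ^ (2 - s))) := by
  have hker := kernel_meas hs0
  have hprod : Measurable (uncurry fun (x z : ℂ) =>
      w z * ENNReal.ofReal (1 / ‖z - x‖ ^ s)) := (hw.comp measurable_snd).mul hker
  rw [lintegral_lintegral_swap hprod.aemeasurable]
  calc (∫⁻ z in A, ∫⁻ x in ball y r, w z * ENNReal.ofReal (1 / ‖z - x‖ ^ s))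
      = ∫⁻ z in A, w z * ∫⁻ x in ball y r, ENNReal.ofReal (1 / ‖z - x‖ ^ s) := by
        refine lintegral_congr fun z => lintegral_const_mul _ ?_
        apply ENNReal.measurable_ofReal.comp
        exact measurable_const.div
          ((Real.continuous_rpow_const hs0.le).comp
            ((continuous_const.sub continuous_id).norm)).measurable
    _ ≤ ∫⁻ z in A, w z * ((C s + (NNReal.pi : ℝ≥0∞)) * ENNReal.ofReal (r ^ (2 - s))) :=
        lintegral_mono fun z => mul_le_mul_right (ball_bound hs0 hs2 hr y z) _
    _ = (∫⁻ z in A, w z) * ((C s + (NNReal.pi : ℝ≥0∞)) * ENNReal.ofReal (r ^ (2 - s))) :=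
        lintegral_mul_const _ hw

lemma tail_small {X : Set ℂ} (x₀ : ℂ) {w : ℂ → ℝ≥0∞}
    (hfin : (∫⁻ z in X, w z) ≠ ∞) {ε : ℝ≥0∞} (hε : 0 < ε) :
    ∃ ρ : ℝ, 0 < ρ ∧ (∫⁻ z in X ∩ ball x₀ ρ, w z) < ε := by
  set ν := (volume.restrict X).withDensity w with hν
  have hmeas : ∀ ρ : ℝ, (∫⁻ z in X ∩ ball x₀ ρ, w z) = ν (ball x₀ ρ) := fun ρ => by
    rw [hν, withDensity_apply _ measurableSet_ball,
      Measure.restrict_restrict measurableSet_ball, Set.inter_comm]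
  have hνuniv : ν Set.univ = ∫⁻ z in X, w z := by
    rw [hν, withDensity_apply _ MeasurableSet.univ, Measure.restrict_univ]
  have hanti : Antitone fun m : ℕ => ball x₀ (1 / (m + 1 : ℝ)) := by
    intro m m' h
    apply ball_subset_ball
    apply one_div_le_one_div_of_le (by positivity)
    have : (m : ℝ) ≤ m' := Nat.cast_le.mpr h
    linarith
  have hint : (⋂ m : ℕ, ball x₀ (1 / (m + 1 : ℝ))) ⊆ {x₀} := by
    intro x hx
    simp only [mem_iInter, mem_ball] at hx
    by_contra hne
    have hd : 0 < dist x x₀ := dist_pos.mpr (by simpa using hne)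
    obtain ⟨m, hm⟩ := exists_nat_one_div_lt hd
    exact absurd (hx m) (not_lt.mpr hm.le)
  have htend := tendsto_measure_iInter_atTop (μ := ν)
    (fun m => measurableSet_ball.nullMeasurableSet) hanti
    ⟨0, by
      refine ne_of_lt (lt_of_le_of_lt (measure_mono (subset_univ _)) ?_)
      rw [hνuniv]; exact lt_top_iff_ne_top.mpr hfin⟩
  have h0 : ν (⋂ m : ℕ, ball x₀ (1 / (m + 1 : ℝ))) = 0 := by
    have hz : ν ({x₀} : Set ℂ) = 0 := by
      rw [hν, withDensity_apply _ (measurableSet_singleton _)]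
      apply setLIntegral_measure_zero
      rw [Measure.restrict_apply (measurableSet_singleton _)]
      have hsing : volume ({x₀} : Set ℂ) = 0 := by
        have : ({x₀} : Set ℂ) = closedBall x₀ 0 := by simp
        rw [this, Complex.volume_closedBall]; simp
      exact le_antisymm (le_trans (measure_mono inter_subset_left) hsing.le) zero_le
    exact le_antisymm (le_trans (measure_mono hint) hz.le) zero_le
  rw [h0] at htend
  obtain ⟨m, hm⟩ := (htend.eventually_lt_const hε).exists
  exact ⟨1 / (m + 1 : ℝ), by positivity, by rw [hmeas]; exact hm⟩


lemma lintegral_rpow_ne_top {q : ℝ} (hq0 : 0 < q) {X : Set ℂ} {g : ℂ → ℂ}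
    (h : MemLp g (ENNReal.ofReal q) (volume.restrict X)) :
    (∫⁻ z in X, ENNReal.ofReal (‖g z‖ ^ q)) ≠ ∞ := by
  have hp0 : (ENNReal.ofReal q) ≠ 0 := by
    simp only [ne_eq, ENNReal.ofReal_eq_zero, not_le]; exact hq0
  have h2 := h.2
  rw [eLpNorm_eq_lintegral_rpow_enorm_toReal hp0 ENNReal.ofReal_ne_top,
    ENNReal.toReal_ofReal hq0.le] at h2
  have h3 : (∫⁻ z in X, ‖g z‖ₑ ^ q) ≠ ∞ := by
    intro hc
    rw [hc, ENNReal.top_rpow_of_pos (by positivity)] at h2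
    exact absurd h2 (lt_irrefl _)
  have heq : ∀ z : ℂ, ENNReal.ofReal (‖g z‖ ^ q) = ‖g z‖ₑ ^ q := fun z => by
    rw [← ENNReal.ofReal_rpow_of_nonneg (norm_nonneg _) hq0.le, ofReal_norm]
  simp_rw [heq]
  exact h3

lemma lintegral_norm_ne_top {X : Set ℂ} {g : ℂ → ℂ}
    (h : MemLp g 1 (volume.restrict X)) :
    (∫⁻ z in X, ENNReal.ofReal ‖g z‖) ≠ ∞ := by
  have h2 := h.2
  rw [eLpNorm_one_eq_lintegral_enorm] at h2
  simp_rw [ofReal_norm]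
  exact h2.ne


end ExAux

open ExAux

/-- For `1 < q < 2`, `k ∈ L^q(X, dA)` vanishing off the compact set `X`, and `0 < δ₀ < 1`,
the set of `x` with `∫_X |x-x₀|^q |k(z)|^q / |z-x|^q dA_z < δ₀` and
`|x-x₀| ∫_X |k(z)|/|z-x| dA_z < δ₀` has full area density at `x₀`. -/
theorem exceptional_set_full_density
    (q : ℝ) (hq1 : 1 < q) (hq2 : q < 2) (X : Set ℂ) (hX : IsCompact X)
    (x₀ : ℂ) (k : ℂ → ℂ) (hk0 : ∀ z ∉ X, k z = 0)
    (hkLq : MemLp k (ENNReal.ofReal q) (volume.restrict X))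
    (δ₀ : ℝ) (hδ₀ : 0 < δ₀) (hδ₀' : δ₀ < 1) :
    FullAreaDensityAt
      {x : ℂ |
        (∫ z in X, ‖x - x₀‖ ^ q * ‖k z‖ ^ q / ‖z - x‖ ^ q) < δ₀ ∧
        ‖x - x₀‖ * (∫ z in X, ‖k z‖ / ‖z - x‖) < δ₀} x₀ := by
  classical
  have hq0 : (0:ℝ) < q := by linarith
  have hXm : MeasurableSet X := hX.isClosed.measurableSet
  haveI : IsFiniteMeasure (volume.restrict X) :=
    ⟨by rw [Measure.restrict_apply_univ]; exact hX.measure_lt_top⟩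
  obtain ⟨g, hgm, hg⟩ : ∃ g : ℂ → ℂ, Measurable g ∧ k =ᵐ[volume.restrict X] g :=
    ⟨hkLq.1.mk k, hkLq.1.stronglyMeasurable_mk.measurable, hkLq.1.ae_eq_mk⟩
  have hgLq : MemLp g (ENNReal.ofReal q) (volume.restrict X) := hkLq.ae_eq hg
  have hgL1 : MemLp g 1 (volume.restrict X) :=
    hgLq.mono_exponent (ENNReal.one_le_ofReal.mpr hq1.le)
  set w₁ : ℂ → ℝ≥0∞ := fun z => ENNReal.ofReal (‖g z‖ ^ q) with hw₁def
  set w₂ : ℂ → ℝ≥0∞ := fun z => ENNReal.ofReal ‖g z‖ with hw₂def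
  have hw₁ : Measurable w₁ := ENNReal.measurable_ofReal.comp
    ((Real.continuous_rpow_const hq0.le).measurable.comp hgm.norm)
  have hw₂ : Measurable w₂ := ENNReal.measurable_ofReal.comp hgm.norm
  set M₁ := ∫⁻ z in X, w₁ z with hM₁def
  set M₂ := ∫⁻ z in X, w₂ z with hM₂def
  have hM₁ : M₁ ≠ ∞ := lintegral_rpow_ne_top hq0 hgLq
  have hM₂ : M₂ ≠ ∞ := lintegral_norm_ne_top hgL1
  set δ' : ℝ≥0∞ := ENNReal.ofReal δ₀ with hδ'def
  have hδ'0 : δ' ≠ 0 := by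
    simp only [hδ'def, ne_eq, ENNReal.ofReal_eq_zero, not_le]; exact hδ₀
  have hδ't : δ' ≠ ∞ := ENNReal.ofReal_ne_top
  have hδ2 : δ' / 2 ≠ 0 := by
    simp only [ne_eq, ENNReal.div_eq_zero_iff, not_or]
    exact ⟨hδ'0, ENNReal.ofNat_ne_top⟩
  have hδ2t : δ' / 2 ≠ ∞ := by
    exact (ENNReal.div_lt_top hδ't (by norm_num)).ne
  have hδ2pos : (0:ℝ≥0∞) < δ' / 2 := pos_iff_ne_zero.mpr hδ2
  have hπpos : (0:ℝ≥0∞) < (NNReal.pi : ℝ≥0∞) := by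
    rw [ENNReal.coe_pos]
    exact_mod_cast Real.pi_pos
  set Dq := C q + (NNReal.pi : ℝ≥0∞) with hDqdef
  set D1 := C 1 + (NNReal.pi : ℝ≥0∞) with hD1def
  have hDq0 : Dq ≠ 0 := (hπpos.trans_le le_add_self).ne'
  have hDqt : Dq ≠ ∞ := ENNReal.add_ne_top.mpr ⟨C_ne_top hq2, ENNReal.coe_ne_top⟩
  have hD10 : D1 ≠ 0 := (hπpos.trans_le le_add_self).ne'
  have hD1t : D1 ≠ ∞ := ENNReal.add_ne_top.mpr ⟨C_ne_top one_lt_two, ENNReal.coe_ne_top⟩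
  set K₁ := Dq * (δ' / 2)⁻¹ with hK₁def
  set K₂ := D1 * (δ' / 2)⁻¹ with hK₂def
  have hK₁0 : K₁ ≠ 0 := by
    simp only [hK₁def, ne_eq, mul_eq_zero, not_or]
    exact ⟨hDq0, ENNReal.inv_ne_zero.mpr hδ2t⟩
  have hK₁t : K₁ ≠ ∞ := ENNReal.mul_ne_top hDqt (ENNReal.inv_ne_top.mpr hδ2)
  have hK₂0 : K₂ ≠ 0 := by
    simp only [hK₂def, ne_eq, mul_eq_zero, not_or]
    exact ⟨hD10, ENNReal.inv_ne_zero.mpr hδ2t⟩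
  have hK₂t : K₂ ≠ ∞ := ENNReal.mul_ne_top hD1t (ENNReal.inv_ne_top.mpr hδ2)
  unfold FullAreaDensityAt
  refine ENNReal.tendsto_nhds_zero.mpr fun ε hε => ?_
  -- choose ρ
  set tgt : ℝ≥0∞ := ε * (NNReal.pi : ℝ≥0∞) / 2 with htgtdef
  have htgt0 : (0:ℝ≥0∞) < tgt := by
    apply ENNReal.div_pos _ ENNReal.ofNat_ne_top
    simp only [ne_eq, mul_eq_zero, not_or]
    exact ⟨hε.ne', hπpos.ne'⟩
  obtain ⟨ρ₁, hρ₁, hτρ₁⟩ := tail_small x₀ hM₁ (ENNReal.div_pos htgt0.ne' hK₁t)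
  obtain ⟨ρ₂, hρ₂, hτρ₂⟩ := tail_small x₀ hM₂ (ENNReal.div_pos htgt0.ne' hK₂t)
  set ρ : ℝ := min ρ₁ ρ₂ with hρdef
  have hρ : 0 < ρ := lt_min hρ₁ hρ₂
  set N : Set ℂ := X ∩ ball x₀ ρ with hNdef
  set τ₁ := ∫⁻ z in N, w₁ z with hτ₁def
  set τ₂ := ∫⁻ z in N, w₂ z with hτ₂def
  have hKτ₁ : K₁ * τ₁ ≤ tgt := by
    have h1 : τ₁ ≤ tgt / K₁ := by
      refine le_trans (lintegral_mono_set ?_) hτρ₁.le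
      exact inter_subset_inter subset_rfl (ball_subset_ball (min_le_left _ _))
    calc K₁ * τ₁ ≤ K₁ * (tgt / K₁) := mul_le_mul_right h1 _
      _ = tgt := ENNReal.mul_div_cancel hK₁0 hK₁t
  have hKτ₂ : K₂ * τ₂ ≤ tgt := by
    have h1 : τ₂ ≤ tgt / K₂ := by
      refine le_trans (lintegral_mono_set ?_) hτρ₂.le
      exact inter_subset_inter subset_rfl (ball_subset_ball (min_le_right _ _))
    calc K₂ * τ₂ ≤ K₂ * (tgt / K₂) := mul_le_mul_right h1 _
      _ = tgt := ENNReal.mul_div_cancel hK₂0 hK₂t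
  -- eventual conditions
  have hev1 : ∀ᶠ n : ℕ in atTop, (0:ℝ) < 1 / (n:ℝ) :=
    eventually_atTop.mpr ⟨1, fun n hn => by
      have : (0:ℝ) < n := by exact_mod_cast hn
      positivity⟩
  have hev2 : ∀ᶠ n : ℕ in atTop, (1 / (n:ℝ)) ≤ ρ / 2 := by
    filter_upwards [tendsto_one_div_atTop_nhds_zero_nat.eventually_lt_const
      (show (0:ℝ) < ρ / 2 by positivity)] with n hn
    exact hn.le
  have hev3 : ∀ᶠ n : ℕ in atTop,
      ENNReal.ofReal ((2 * (1 / (n:ℝ)) / ρ) ^ q) * M₁ < δ' / 2 := by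
    have t0 : Tendsto (fun n : ℕ => 2 * (1 / (n:ℝ)) / ρ) atTop (𝓝 0) := by
      have := (tendsto_one_div_atTop_nhds_zero_nat.const_mul (2:ℝ)).div_const ρ
      simpa using this
    have t1 : Tendsto (fun n : ℕ => (2 * (1 / (n:ℝ)) / ρ) ^ q) atTop (𝓝 0) := by
      have hc := (Real.continuousAt_rpow_const 0 q (Or.inr hq0.le)).tendsto.comp t0
      rwa [Real.zero_rpow hq0.ne'] at hc
    have t2 : Tendsto (fun n : ℕ =>
        ENNReal.ofReal ((2 * (1 / (n:ℝ)) / ρ) ^ q) * M₁) atTop (𝓝 0) := by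
      have := ENNReal.Tendsto.mul_const (ENNReal.tendsto_ofReal t1) (Or.inr hM₁)
      simpa using this
    exact t2.eventually_lt_const hδ2pos
  have hev4 : ∀ᶠ n : ℕ in atTop,
      ENNReal.ofReal ((1 / (n:ℝ)) * (2 / ρ)) * M₂ < δ' / 2 := by
    have t0 : Tendsto (fun n : ℕ => (1 / (n:ℝ)) * (2 / ρ)) atTop (𝓝 0) := by
      have := tendsto_one_div_atTop_nhds_zero_nat.mul_const (2 / ρ)
      simpa using this
    have t2 : Tendsto (fun n : ℕ =>
        ENNReal.ofReal ((1 / (n:ℝ)) * (2 / ρ)) * M₂) atTop (𝓝 0) := by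
      have := ENNReal.Tendsto.mul_const (ENNReal.tendsto_ofReal t0) (Or.inr hM₂)
      simpa using this
    exact t2.eventually_lt_const hδ2pos
  filter_upwards [hev1, hev2, hev3, hev4] with n hr0 hrρ hfar1 hfar2
  set r : ℝ := 1 / (n:ℝ) with hrdef
  set B : Set ℂ := ball x₀ r with hBdef
  set Eset : Set ℂ :=
    {x : ℂ | (∫ z in X, ‖x - x₀‖ ^ q * ‖k z‖ ^ q / ‖z - x‖ ^ q) < δ₀ ∧
      ‖x - x₀‖ * (∫ z in X, ‖k z‖ / ‖z - x‖) < δ₀} with hEdef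
  -- kernels as functions of x
  set G₁ : ℂ → ℝ≥0∞ := fun x => ∫⁻ z in N, w₁ z * ENNReal.ofReal (1 / ‖z - x‖ ^ q)
    with hG₁def
  set G₂ : ℂ → ℝ≥0∞ := fun x => ∫⁻ z in N, w₂ z * ENNReal.ofReal (1 / ‖z - x‖)
    with hG₂def
  have hG₁m : Measurable G₁ :=
    Measurable.lintegral_prod_right (f := fun (x z : ℂ) => w₁ z * ENNReal.ofReal (1 / ‖z - x‖ ^ q))
      ((hw₁.comp measurable_snd).mul (kernel_meas hq0))
  have hG₂m : Measurable G₂ :=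
    Measurable.lintegral_prod_right (f := fun (x z : ℂ) => w₂ z * ENNReal.ofReal (1 / ‖z - x‖))
      ((hw₂.comp measurable_snd).mul (ENNReal.measurable_ofReal.comp
        (measurable_const.div ((measurable_snd.sub measurable_fst).norm))))
  -- inclusion into bad sets
  have hincl : B \ Eset ⊆
      ({x : ℂ | δ' / 2 ≤ ENNReal.ofReal (r ^ q) * G₁ x} ∩ B) ∪
      ({x : ℂ | δ' / 2 ≤ ENNReal.ofReal r * G₂ x} ∩ B) := by
    rintro x ⟨hxB, hxE⟩
    by_cases h₁ : δ' / 2 ≤ ENNReal.ofReal (r ^ q) * G₁ x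
    · exact Or.inl ⟨h₁, hxB⟩
    by_cases h₂ : δ' / 2 ≤ ENNReal.ofReal r * G₂ x
    · exact Or.inr ⟨h₂, hxB⟩
    exfalso
    apply hxE
    push_neg at h₁ h₂
    have hxr : ‖x - x₀‖ < r := by
      rw [← dist_eq_norm]; exact mem_ball.mp hxB
    -- the far-field distance bound
    have hdistfar : ∀ z ∈ X \ ball x₀ ρ, ρ / 2 ≤ ‖z - x‖ := by
      intro z hz
      have h1 : ρ ≤ dist z x₀ := by
        have := hz.2; rw [mem_ball, not_lt] at this; exact this
      have h3 : dist z x₀ ≤ dist z x + dist x x₀ := dist_triangle _ _ _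
      have h2 : dist x x₀ < r := mem_ball.mp hxB
      rw [← dist_eq_norm]
      linarith
    have hXd : Disjoint N (X \ ball x₀ ρ) :=
      disjoint_sdiff_right.mono_left inter_subset_right
    have hXun : N ∪ (X \ ball x₀ ρ) = X := by
      rw [hNdef]; exact inter_union_diff X (ball x₀ ρ)
    constructor
    · -- first condition
      have hkg : (∫ z in X, ‖x - x₀‖ ^ q * ‖k z‖ ^ q / ‖z - x‖ ^ q)
          = ∫ z in X, ‖x - x₀‖ ^ q * ‖g z‖ ^ q / ‖z - x‖ ^ q :=
        integral_congr_ae (hg.mono fun z hz => by dsimp only; rw [hz])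
      have hmeas : AEStronglyMeasurable
          (fun z => ‖x - x₀‖ ^ q * ‖g z‖ ^ q / ‖z - x‖ ^ q) (volume.restrict X) := by
        apply Measurable.aestronglyMeasurable
        apply Measurable.div
        · exact measurable_const.mul
            ((Real.continuous_rpow_const hq0.le).measurable.comp hgm.norm)
        · exact ((Real.continuous_rpow_const hq0.le).comp
            ((continuous_id.sub continuous_const).norm)).measurable
      have hnn : 0 ≤ᵐ[volume.restrict X]
          fun z => ‖x - x₀‖ ^ q * ‖g z‖ ^ q / ‖z - x‖ ^ q :=
        Filter.Eventually.of_forall fun z => by positivity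
      have heq := integral_eq_lintegral_of_nonneg_ae hnn hmeas
      set L := ∫⁻ z in X, ENNReal.ofReal (‖x - x₀‖ ^ q * ‖g z‖ ^ q / ‖z - x‖ ^ q)
        with hLdef
      have hLlt : L < δ' := by
        have hptwise : ∀ z : ℂ, ENNReal.ofReal (‖x - x₀‖ ^ q * ‖g z‖ ^ q / ‖z - x‖ ^ q)
            ≤ ENNReal.ofReal (r ^ q) * (w₁ z * ENNReal.ofReal (1 / ‖z - x‖ ^ q)) := by
          intro z
          rw [hw₁def, ← ENNReal.ofReal_mul (by positivity),
            ← ENNReal.ofReal_mul (by positivity)]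
          apply ENNReal.ofReal_le_ofReal
          have h1 : ‖x - x₀‖ ^ q ≤ r ^ q :=
            Real.rpow_le_rpow (norm_nonneg _) hxr.le hq0.le
          calc ‖x - x₀‖ ^ q * ‖g z‖ ^ q / ‖z - x‖ ^ q
              = ‖x - x₀‖ ^ q * (‖g z‖ ^ q * (1 / ‖z - x‖ ^ q)) := by ring
            _ ≤ r ^ q * (‖g z‖ ^ q * (1 / ‖z - x‖ ^ q)) :=
                mul_le_mul_of_nonneg_right h1 (by positivity)
        have hkerm : Measurable fun z : ℂ => ENNReal.ofReal (1 / ‖z - x‖ ^ q) := by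
          apply ENNReal.measurable_ofReal.comp
          exact measurable_const.div ((Real.continuous_rpow_const hq0.le).comp
            ((continuous_id.sub continuous_const).norm)).measurable
        have hL1 : L ≤ ENNReal.ofReal (r ^ q) *
            ∫⁻ z in X, w₁ z * ENNReal.ofReal (1 / ‖z - x‖ ^ q) := by
          refine le_trans (lintegral_mono hptwise) ?_
          rw [lintegral_const_mul (f := fun z => w₁ z * ENNReal.ofReal (1 / ‖z - x‖ ^ q)) _ (hw₁.mul hkerm)]
        have hsplit2 : (∫⁻ z in X, w₁ z * ENNReal.ofReal (1 / ‖z - x‖ ^ q))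
            = G₁ x + ∫⁻ z in X \ ball x₀ ρ, w₁ z * ENNReal.ofReal (1 / ‖z - x‖ ^ q) := by
          rw [hG₁def, ← lintegral_union (hXm.diff measurableSet_ball) hXd, hXun]
        have hfarbd : (∫⁻ z in X \ ball x₀ ρ, w₁ z * ENNReal.ofReal (1 / ‖z - x‖ ^ q))
            ≤ ENNReal.ofReal (1 / (ρ / 2) ^ q) * M₁ := by
          have hb : ∀ z ∈ X \ ball x₀ ρ, w₁ z * ENNReal.ofReal (1 / ‖z - x‖ ^ q)
              ≤ w₁ z * ENNReal.ofReal (1 / (ρ / 2) ^ q) := by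
            intro z hz
            apply mul_le_mul_right
            apply ENNReal.ofReal_le_ofReal
            exact one_div_le_one_div_of_le (by positivity)
              (Real.rpow_le_rpow (by positivity) (hdistfar z hz) hq0.le)
          calc (∫⁻ z in X \ ball x₀ ρ, w₁ z * ENNReal.ofReal (1 / ‖z - x‖ ^ q))
              ≤ ∫⁻ z in X \ ball x₀ ρ, w₁ z * ENNReal.ofReal (1 / (ρ / 2) ^ q) :=
                setLIntegral_mono' (hXm.diff measurableSet_ball) hb
            _ = (∫⁻ z in X \ ball x₀ ρ, w₁ z) * ENNReal.ofReal (1 / (ρ / 2) ^ q) :=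
                lintegral_mul_const _ hw₁
            _ ≤ M₁ * ENNReal.ofReal (1 / (ρ / 2) ^ q) :=
                mul_le_mul_left (lintegral_mono_set diff_subset) _
            _ = ENNReal.ofReal (1 / (ρ / 2) ^ q) * M₁ := mul_comm _ _
        have hfarkey : ENNReal.ofReal (r ^ q) * (ENNReal.ofReal (1 / (ρ / 2) ^ q) * M₁)
            = ENNReal.ofReal ((2 * r / ρ) ^ q) * M₁ := by
          rw [← mul_assoc, ← ENNReal.ofReal_mul (by positivity)]
          congr 2
          rw [show (2 * r / ρ) = r / (ρ / 2) by field_simp,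
            Real.div_rpow hr0.le (by positivity)]
          rw [mul_one_div]
        calc L ≤ ENNReal.ofReal (r ^ q) *
              (G₁ x + ∫⁻ z in X \ ball x₀ ρ, w₁ z * ENNReal.ofReal (1 / ‖z - x‖ ^ q)) := by
              rw [← hsplit2]; exact hL1
          _ = ENNReal.ofReal (r ^ q) * G₁ x + ENNReal.ofReal (r ^ q) *
              (∫⁻ z in X \ ball x₀ ρ, w₁ z * ENNReal.ofReal (1 / ‖z - x‖ ^ q)) := by
              rw [mul_add]
          _ ≤ ENNReal.ofReal (r ^ q) * G₁ x +
              ENNReal.ofReal (r ^ q) * (ENNReal.ofReal (1 / (ρ / 2) ^ q) * M₁) := by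
              gcongr
          _ = ENNReal.ofReal (r ^ q) * G₁ x + ENNReal.ofReal ((2 * r / ρ) ^ q) * M₁ := by
              rw [hfarkey]
          _ < δ' / 2 + δ' / 2 := ENNReal.add_lt_add h₁ hfar1
          _ = δ' := ENNReal.add_halves _
      rw [hkg, heq]
      have hLne : L ≠ ∞ := (hLlt.trans_le le_top).ne
      exact ENNReal.toReal_lt_of_lt_ofReal hLlt
    · -- second condition
      have hkg : (∫ z in X, ‖k z‖ / ‖z - x‖) = ∫ z in X, ‖g z‖ / ‖z - x‖ :=
        integral_congr_ae (hg.mono fun z hz => by dsimp only; rw [hz])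
      have hmeas : AEStronglyMeasurable
          (fun z => ‖g z‖ / ‖z - x‖) (volume.restrict X) := by
        apply Measurable.aestronglyMeasurable
        exact hgm.norm.div ((continuous_id.sub continuous_const).norm).measurable
      have hnn : 0 ≤ᵐ[volume.restrict X] fun z => ‖g z‖ / ‖z - x‖ :=
        Filter.Eventually.of_forall fun z => by positivity
      have heq := integral_eq_lintegral_of_nonneg_ae hnn hmeas
      set L := ∫⁻ z in X, ENNReal.ofReal (‖g z‖ / ‖z - x‖) with hLdef
      have hTlt : ENNReal.ofReal ‖x - x₀‖ * L < δ' := by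
        have hptwise : ∀ z : ℂ, ENNReal.ofReal (‖g z‖ / ‖z - x‖)
            = w₂ z * ENNReal.ofReal (1 / ‖z - x‖) := by
          intro z
          rw [hw₂def, ← ENNReal.ofReal_mul (norm_nonneg _), mul_one_div]
        have hkerm : Measurable fun z : ℂ => ENNReal.ofReal (1 / ‖z - x‖) := by
          apply ENNReal.measurable_ofReal.comp
          exact measurable_const.div ((continuous_id.sub continuous_const).norm).measurable
        have hsplit2 : L = G₂ x + ∫⁻ z in X \ ball x₀ ρ, w₂ z * ENNReal.ofReal (1 / ‖z - x‖) := by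
          rw [hLdef]
          simp_rw [hptwise]
          rw [hG₂def, ← lintegral_union (hXm.diff measurableSet_ball) hXd, hXun]
        have hfarbd : (∫⁻ z in X \ ball x₀ ρ, w₂ z * ENNReal.ofReal (1 / ‖z - x‖))
            ≤ ENNReal.ofReal (2 / ρ) * M₂ := by
          have hb : ∀ z ∈ X \ ball x₀ ρ, w₂ z * ENNReal.ofReal (1 / ‖z - x‖)
              ≤ w₂ z * ENNReal.ofReal (2 / ρ) := by
            intro z hz
            apply mul_le_mul_right
            apply ENNReal.ofReal_le_ofReal
            rw [show (2:ℝ) / ρ = 1 / (ρ / 2) by rw [one_div_div]]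
            exact one_div_le_one_div_of_le (by positivity) (hdistfar z hz)
          calc (∫⁻ z in X \ ball x₀ ρ, w₂ z * ENNReal.ofReal (1 / ‖z - x‖))
              ≤ ∫⁻ z in X \ ball x₀ ρ, w₂ z * ENNReal.ofReal (2 / ρ) :=
                setLIntegral_mono' (hXm.diff measurableSet_ball) hb
            _ = (∫⁻ z in X \ ball x₀ ρ, w₂ z) * ENNReal.ofReal (2 / ρ) :=
                lintegral_mul_const _ hw₂
            _ ≤ M₂ * ENNReal.ofReal (2 / ρ) :=
                mul_le_mul_left (lintegral_mono_set diff_subset) _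
            _ = ENNReal.ofReal (2 / ρ) * M₂ := mul_comm _ _
        calc ENNReal.ofReal ‖x - x₀‖ * L
            ≤ ENNReal.ofReal r * L :=
              mul_le_mul_left (ENNReal.ofReal_le_ofReal hxr.le) _
          _ = ENNReal.ofReal r * G₂ x + ENNReal.ofReal r *
              (∫⁻ z in X \ ball x₀ ρ, w₂ z * ENNReal.ofReal (1 / ‖z - x‖)) := by
              rw [hsplit2, mul_add]
          _ ≤ ENNReal.ofReal r * G₂ x + ENNReal.ofReal r * (ENNReal.ofReal (2 / ρ) * M₂) := by
              gcongr
          _ = ENNReal.ofReal r * G₂ x + ENNReal.ofReal (r * (2 / ρ)) * M₂ := by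
              rw [← mul_assoc, ← ENNReal.ofReal_mul hr0.le]
          _ < δ' / 2 + δ' / 2 := ENNReal.add_lt_add h₂ hfar2
          _ = δ' := ENNReal.add_halves _
      rw [hkg, heq]
      have hfin : ENNReal.ofReal (‖x - x₀‖ * (∫⁻ z in X,
          ENNReal.ofReal (‖g z‖ / ‖z - x‖)).toReal) ≤ ENNReal.ofReal ‖x - x₀‖ * L := by
        rw [ENNReal.ofReal_mul (norm_nonneg _)]
        exact mul_le_mul_right ENNReal.ofReal_toReal_le _
      have := hfin.trans_lt hTlt
      rw [hδ'def] at this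
      exact (ENNReal.ofReal_lt_ofReal_iff hδ₀).mp this
  -- measure estimates
  have hrq : (0:ℝ) < r ^ q := Real.rpow_pos_of_pos hr0 q
  have hcheb₁ : volume ({x : ℂ | δ' / 2 ≤ ENNReal.ofReal (r ^ q) * G₁ x} ∩ B)
      ≤ ENNReal.ofReal (r ^ q) * (τ₁ * (Dq * ENNReal.ofReal (r ^ (2 - q)))) / (δ' / 2) := by
    rw [← Measure.restrict_apply' measurableSet_ball]
    refine le_trans (meas_ge_le_lintegral_div
      ((measurable_const.mul hG₁m).aemeasurable) hδ2 hδ2t) ?_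
    apply ENNReal.div_le_div_right
    simp only [Pi.mul_apply]; rw [lintegral_const_mul _ hG₁m]
    exact mul_le_mul_right (fubini_bound hq0 hq2 hr0 x₀ hw₁) _
  have hcheb₂ : volume ({x : ℂ | δ' / 2 ≤ ENNReal.ofReal r * G₂ x} ∩ B)
      ≤ ENNReal.ofReal r * (τ₂ * (D1 * ENNReal.ofReal (r ^ (2 - (1:ℝ))))) / (δ' / 2) := by
    rw [← Measure.restrict_apply' measurableSet_ball]
    refine le_trans (meas_ge_le_lintegral_div
      ((measurable_const.mul hG₂m).aemeasurable) hδ2 hδ2t) ?_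
    apply ENNReal.div_le_div_right
    simp only [Pi.mul_apply]; rw [lintegral_const_mul _ hG₂m]
    refine mul_le_mul_right ?_ _
    have hfb := fubini_bound (s := 1) one_pos one_lt_two hr0 x₀ (A := N) hw₂
    simp only [Real.rpow_one] at hfb
    exact hfb
  -- combine
  have hr2 : ENNReal.ofReal (r ^ q) * ENNReal.ofReal (r ^ (2 - q))
      = ENNReal.ofReal (r ^ 2) := by
    rw [← ENNReal.ofReal_mul (by positivity), ← Real.rpow_add hr0]
    norm_num [Real.rpow_two]
  have hr2' : ENNReal.ofReal r * ENNReal.ofReal (r ^ (2 - (1:ℝ)))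
      = ENNReal.ofReal (r ^ 2) := by
    rw [← ENNReal.ofReal_mul hr0.le]
    congr 1
    rw [show (2 - (1:ℝ)) = 1 by norm_num, Real.rpow_one]
    ring
  have hbound₁ : ENNReal.ofReal (r ^ q) * (τ₁ * (Dq * ENNReal.ofReal (r ^ (2 - q)))) / (δ' / 2)
      ≤ ENNReal.ofReal (r ^ 2) * tgt := by
    rw [div_eq_mul_inv]
    calc ENNReal.ofReal (r ^ q) * (τ₁ * (Dq * ENNReal.ofReal (r ^ (2 - q)))) * (δ' / 2)⁻¹
        = (ENNReal.ofReal (r ^ q) * ENNReal.ofReal (r ^ (2 - q))) * (K₁ * τ₁) := by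
          rw [hK₁def]; ring
      _ = ENNReal.ofReal (r ^ 2) * (K₁ * τ₁) := by rw [hr2]
      _ ≤ ENNReal.ofReal (r ^ 2) * tgt := mul_le_mul_right hKτ₁ _
  have hbound₂ : ENNReal.ofReal r * (τ₂ * (D1 * ENNReal.ofReal (r ^ (2 - (1:ℝ))))) / (δ' / 2)
      ≤ ENNReal.ofReal (r ^ 2) * tgt := by
    rw [div_eq_mul_inv]
    calc ENNReal.ofReal r * (τ₂ * (D1 * ENNReal.ofReal (r ^ (2 - (1:ℝ))))) * (δ' / 2)⁻¹
        = (ENNReal.ofReal r * ENNReal.ofReal (r ^ (2 - (1:ℝ)))) * (K₂ * τ₂) := by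
          rw [hK₂def]; ring
      _ = ENNReal.ofReal (r ^ 2) * (K₂ * τ₂) := by rw [hr2']
      _ ≤ ENNReal.ofReal (r ^ 2) * tgt := mul_le_mul_right hKτ₂ _
  have hBvol : volume B = ENNReal.ofReal (r ^ 2) * (NNReal.pi : ℝ≥0∞) := by
    rw [hBdef, Complex.volume_ball, ← ENNReal.ofReal_pow hr0.le]
  have htotal : volume (B \ Eset) ≤ ε * volume B := by
    calc volume (B \ Eset)
        ≤ volume (({x : ℂ | δ' / 2 ≤ ENNReal.ofReal (r ^ q) * G₁ x} ∩ B) ∪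
            ({x : ℂ | δ' / 2 ≤ ENNReal.ofReal r * G₂ x} ∩ B)) := measure_mono hincl
      _ ≤ volume ({x : ℂ | δ' / 2 ≤ ENNReal.ofReal (r ^ q) * G₁ x} ∩ B) +
            volume ({x : ℂ | δ' / 2 ≤ ENNReal.ofReal r * G₂ x} ∩ B) := measure_union_le _ _
      _ ≤ ENNReal.ofReal (r ^ 2) * tgt + ENNReal.ofReal (r ^ 2) * tgt := by
          exact add_le_add (hcheb₁.trans hbound₁) (hcheb₂.trans hbound₂)
      _ = ENNReal.ofReal (r ^ 2) * (tgt + tgt) := by rw [mul_add]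
      _ = ENNReal.ofReal (r ^ 2) * (ε * (NNReal.pi : ℝ≥0∞)) := by
          rw [htgtdef, ENNReal.add_halves]
      _ = ε * volume B := by rw [hBvol]; ring
  have hB0 : volume B ≠ 0 := (measure_ball_pos volume x₀ hr0).ne'
  have hBt : volume B ≠ ∞ := measure_ball_lt_top.ne
  calc volume (B \ Eset) / volume B ≤ (ε * volume B) / volume B :=
        ENNReal.div_le_div_right htotal _
    _ = ε := by
        rw [div_eq_mul_inv, mul_assoc, ← div_eq_mul_inv, ENNReal.div_self hB0 hBt, mul_one]
end
end

section
/- Let 1 < q < 2 and x₀ ∈ ℂ. For each positive integer n let Δ_n = {x ∈ ℂ : |x − x₀| < 1/n} and define w_n(z) = (1/m(Δ_n)) ∫_{Δ_n} |x − x₀|^q / |z − x|^q dm_x for z ∈ ℂ. Then w_n(z) ≤ 2/(2 − q) for all z ∈ ℂ and all n. -/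
/-!
On `B(x₀, r)` we have `‖x - x₀‖ ^ q ≤ r ^ q`, so it suffices to bound
`∫_{B(x₀, r)} ‖z - x‖ ^ (-q)`. Recentring the ball at the singularity `z` only increases this
integral: the part of `B(x₀, r)` outside `B(z, r)`, where the kernel is `≤ r ^ (-q)`, is traded
for a set of equal measure inside `B(z, r)`, where it is `≥ r ^ (-q)`. In polar coordinates in
dimension `d > q`, `∫_{B(0, r)} ‖x‖ ^ (-q) = d m(B(0, 1)) r ^ (d - q) / (d - q)`, and dividing
`r ^ q` times this by `m(B(x₀, r)) = m(B(0, 1)) r ^ d` gives `d / (d - q)`, i.e. `2 / (2 - q)`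
in the plane.
-/

open MeasureTheory Metric Set Module
open scoped ENNReal

theorem setLIntegral_le_setLIntegral_of_measure_eq {α : Type*} [MeasurableSpace α]
    {μ : Measure α} {A B : Set α} (hA : MeasurableSet A) (hB : MeasurableSet B)
    (hAB : μ A = μ B) (hA_fin : μ A ≠ ∞) {g : α → ℝ≥0∞} {c : ℝ≥0∞}
    (h_out : ∀ x ∈ A \ B, g x ≤ c) (h_in : ∀ᵐ x ∂μ.restrict (B \ A), c ≤ g x) :
    ∫⁻ x in A, g x ∂μ ≤ ∫⁻ x in B, g x ∂μ := by
  have h_sdiff : μ (A \ B) = μ (B \ A) := by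
    have h_inter : μ (A ∩ B) ≠ ∞ := measure_ne_top_of_subset inter_subset_left hA_fin
    refine (ENNReal.add_left_inj h_inter).1 ?_
    rw [measure_sdiff_add_inter A hB, hAB, inter_comm, measure_sdiff_add_inter B hA]
  calc ∫⁻ x in A, g x ∂μ = ∫⁻ x in A ∩ B, g x ∂μ + ∫⁻ x in A \ B, g x ∂μ :=
        (lintegral_inter_add_sdiff g A hB).symm
    _ ≤ ∫⁻ x in A ∩ B, g x ∂μ + ∫⁻ _ in A \ B, c ∂μ := by
        gcongr ∫⁻ x in A ∩ B, g x ∂μ + ?_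
        exact setLIntegral_mono' (hA.diff hB) h_out
    _ = ∫⁻ x in B ∩ A, g x ∂μ + ∫⁻ _ in B \ A, c ∂μ := by
        rw [inter_comm, setLIntegral_const, setLIntegral_const, h_sdiff]
    _ ≤ ∫⁻ x in B ∩ A, g x ∂μ + ∫⁻ x in B \ A, g x ∂μ := by
        gcongr ∫⁻ x in B ∩ A, g x ∂μ + ?_
        exact lintegral_mono_ae h_in
    _ = ∫⁻ x in B, g x ∂μ := lintegral_inter_add_sdiff g B hA

section

variable {E : Type*} [NormedAddCommGroup E] [NormedSpace ℝ E] [FiniteDimensional ℝ E]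
  [MeasurableSpace E] [BorelSpace E] (μ : Measure E) [μ.IsAddHaarMeasure]

theorem integral_ball_zero_norm_rpow_neg [Nontrivial E] {q : ℝ} (hq : q < finrank ℝ E) {r : ℝ}
    (hr : 0 ≤ r) :
    ∫ x in ball (0 : E) r, ‖x‖ ^ (-q) ∂μ =
      finrank ℝ E * μ.real (ball 0 1) * (r ^ (finrank ℝ E - q) / (finrank ℝ E - q)) := by
  have hd : 1 ≤ finrank ℝ E := finrank_pos
  have h_radial : ∫ y in Ioi (0 : ℝ), y ^ (finrank ℝ E - 1) • (Iio r).indicator (· ^ (-q)) y =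
      ∫ y in (0 : ℝ)..r, y ^ ((finrank ℝ E : ℝ) - q - 1) := by
    rw [intervalIntegral.integral_of_le hr, integral_Ioc_eq_integral_Ioo, ← Ioi_inter_Iio,
      ← setIntegral_indicator measurableSet_Iio]
    refine setIntegral_congr_fun measurableSet_Ioi fun y (hy : 0 < y) => ?_
    by_cases hyr : y < r
    · simp only [indicator_of_mem (show y ∈ Iio r from hyr), smul_eq_mul]
      rw [← Real.rpow_natCast, Nat.cast_sub hd, ← Real.rpow_add hy]
      ring_nf
    · simp [hyr]
  rw [← integral_indicator measurableSet_ball]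
  have h_indicator :
      (ball (0 : E) r).indicator (‖·‖ ^ (-q)) = fun x => (Iio r).indicator (· ^ (-q)) ‖x‖ := by
    ext x; simp [indicator]
  rw [h_indicator, integral_fun_norm_addHaar, h_radial, integral_rpow (Or.inl (by linarith)),
    Real.zero_rpow (by linarith)]
  simp only [smul_eq_mul, nsmul_eq_mul]
  ring_nf

theorem lintegral_ball_zero_norm_rpow_neg [Nontrivial E] {q : ℝ} (hq : q < finrank ℝ E) {r : ℝ}
    (hr : 0 ≤ r) :
    ∫⁻ x in ball (0 : E) r, ENNReal.ofReal (‖x‖ ^ (-q)) ∂μ =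
      ENNReal.ofReal
        (finrank ℝ E * μ.real (ball 0 1) * (r ^ (finrank ℝ E - q) / (finrank ℝ E - q))) := by
  have h_int : IntegrableOn (fun x : E => ‖x‖ ^ (-q)) (ball 0 r) μ :=
    integrableOn_ball_of_norm_le_rpow finrank_pos hq (C := 1)
      (ae_of_all _ fun x => by simp [abs_of_nonneg (Real.rpow_nonneg (norm_nonneg x) _)])
      (measurable_norm.pow_const _).aestronglyMeasurable
  rw [← integral_ball_zero_norm_rpow_neg μ hq hr,
    ofReal_integral_eq_lintegral_ofReal h_int (ae_of_all _ fun x => by positivity)]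

theorem setLIntegral_ball_norm_sub_rpow_neg_le [Nontrivial E] {q : ℝ} (hq : 0 ≤ q)
    (x₀ z : E) (r : ℝ) :
    ∫⁻ x in ball x₀ r, ENNReal.ofReal (‖x - z‖ ^ (-q)) ∂μ ≤
      ∫⁻ x in ball (0 : E) r, ENNReal.ofReal (‖x‖ ^ (-q)) ∂μ := by
  have h_out : ∀ x ∈ ball x₀ r \ ball z r, ENNReal.ofReal (‖x - z‖ ^ (-q)) ≤
      ENNReal.ofReal (r ^ (-q)) := fun x hx => by
    have hxz : r ≤ ‖x - z‖ := by simpa [dist_eq_norm] using hx.2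
    exact ENNReal.ofReal_le_ofReal
      (Real.rpow_le_rpow_of_nonpos (pos_of_mem_ball hx.1) hxz (neg_nonpos.2 hq))
  have h_in : ∀ᵐ x ∂μ.restrict (ball z r \ ball x₀ r),
      ENNReal.ofReal (r ^ (-q)) ≤ ENNReal.ofReal (‖x - z‖ ^ (-q)) := by
    filter_upwards [ae_restrict_mem (measurableSet_ball.diff measurableSet_ball),
      ae_restrict_of_ae (μ.ae_ne z)] with x hx hxz
    have hxr : ‖x - z‖ < r := by simpa [dist_eq_norm] using hx.1
    exact ENNReal.ofReal_le_ofReal (Real.rpow_le_rpow_of_nonpos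
      (norm_pos_iff.2 (sub_ne_zero.2 hxz)) hxr.le (neg_nonpos.2 hq))
  calc ∫⁻ x in ball x₀ r, ENNReal.ofReal (‖x - z‖ ^ (-q)) ∂μ
      ≤ ∫⁻ x in ball z r, ENNReal.ofReal (‖x - z‖ ^ (-q)) ∂μ :=
        setLIntegral_le_setLIntegral_of_measure_eq measurableSet_ball measurableSet_ball
          (by rw [Measure.addHaar_ball_center, Measure.addHaar_ball_center μ z])
          measure_ball_lt_top.ne h_out h_in
    _ = ∫⁻ x in ball (0 : E) r, ENNReal.ofReal (‖x‖ ^ (-q)) ∂μ := by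
        have := (measurePreserving_sub_right μ z).setLIntegral_comp_preimage_emb
          (MeasurableEquiv.subRight z).measurableEmbedding (fun x => ENNReal.ofReal (‖x‖ ^ (-q)))
          (ball 0 r)
        rwa [show (· - z) ⁻¹' ball (0 : E) r = ball z r by ext; simp [dist_eq_norm]] at this

theorem lintegral_ball_norm_sub_rpow_div_rpow_le [Nontrivial E] {q : ℝ} (hq₀ : 0 ≤ q)
    (hq : q < finrank ℝ E) (x₀ z : E) {r : ℝ} (hr : 0 ≤ r) :
    ∫⁻ x in ball x₀ r, ENNReal.ofReal (‖x - x₀‖ ^ q / ‖z - x‖ ^ q) ∂μ ≤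
      ENNReal.ofReal (r ^ q *
        (finrank ℝ E * μ.real (ball 0 1) * (r ^ (finrank ℝ E - q) / (finrank ℝ E - q)))) := by
  calc ∫⁻ x in ball x₀ r, ENNReal.ofReal (‖x - x₀‖ ^ q / ‖z - x‖ ^ q) ∂μ
      ≤ ∫⁻ x in ball x₀ r, ENNReal.ofReal (r ^ q) * ENNReal.ofReal (‖x - z‖ ^ (-q)) ∂μ := by
        refine setLIntegral_mono' measurableSet_ball fun x hx => ?_
        have hx : ‖x - x₀‖ ≤ r := (mem_ball_iff_norm.1 hx).le
        rw [← ENNReal.ofReal_mul (by positivity), norm_sub_rev z x,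
          Real.rpow_neg (norm_nonneg _), ← div_eq_mul_inv]
        gcongr
    _ = ENNReal.ofReal (r ^ q) * ∫⁻ x in ball x₀ r, ENNReal.ofReal (‖x - z‖ ^ (-q)) ∂μ :=
        lintegral_const_mul' _ _ ENNReal.ofReal_ne_top
    _ ≤ ENNReal.ofReal (r ^ q) * ∫⁻ x in ball (0 : E) r, ENNReal.ofReal (‖x‖ ^ (-q)) ∂μ := by
        gcongr ENNReal.ofReal (r ^ q) * ?_
        exact setLIntegral_ball_norm_sub_rpow_neg_le μ hq₀ x₀ z r
    _ = _ := by
        rw [lintegral_ball_zero_norm_rpow_neg μ hq hr, ← ENNReal.ofReal_mul (by positivity)]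

theorem average_ball_norm_sub_rpow_div_rpow_le {q : ℝ} (hq₀ : 0 ≤ q) (hq : q < finrank ℝ E)
    (x₀ z : E) (r : ℝ) :
    (μ.real (ball x₀ r))⁻¹ * ∫ x in ball x₀ r, ‖x - x₀‖ ^ q / ‖z - x‖ ^ q ∂μ ≤
      finrank ℝ E / (finrank ℝ E - q) := by
  have : Nontrivial E :=
    Module.nontrivial_of_finrank_pos (R := ℝ) (by exact_mod_cast hq₀.trans_lt hq)
  rcases le_or_gt r 0 with hr | hr
  · simp [ball_eq_empty.2 hr]
    positivity
  have h_int : ∫ x in ball x₀ r, ‖x - x₀‖ ^ q / ‖z - x‖ ^ q ∂μ ≤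
      r ^ q * (finrank ℝ E * μ.real (ball 0 1) * (r ^ (finrank ℝ E - q) / (finrank ℝ E - q))) := by
    rw [integral_eq_lintegral_of_nonneg_ae (ae_of_all _ fun x => by positivity)
      (by fun_prop : Measurable fun x => ‖x - x₀‖ ^ q / ‖z - x‖ ^ q).aestronglyMeasurable]
    exact ENNReal.toReal_le_of_le_ofReal (by positivity)
      (lintegral_ball_norm_sub_rpow_div_rpow_le μ hq₀ hq x₀ z hr.le)
  have h_vol : μ.real (ball x₀ r) = r ^ finrank ℝ E * μ.real (ball 0 1) := by
    rw [measureReal_def, Measure.addHaar_ball_of_pos μ x₀ hr, ENNReal.toReal_mul,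
      ENNReal.toReal_ofReal (by positivity), measureReal_def]
  have h_unit : 0 < μ.real (ball (0 : E) 1) :=
    ENNReal.toReal_pos (measure_ball_pos μ 0 one_pos).ne' measure_ball_lt_top.ne
  have h_pow : r ^ q * r ^ ((finrank ℝ E : ℝ) - q) = r ^ finrank ℝ E := by
    rw [← Real.rpow_add hr, add_sub_cancel, Real.rpow_natCast]
  rw [h_vol, inv_mul_le_iff₀ (by positivity)]
  refine h_int.trans_eq ?_
  rw [← h_pow]
  field_simp

end

theorem averaged_potential_bounded_general
    (q : ℝ) (hq1 : 1 < q) (hq2 : q < 2) (x₀ : ℂ) (n : ℕ) (z : ℂ) :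
    (volume (ball x₀ (1 / (n : ℝ)))).toReal⁻¹ *
        (∫ x in ball x₀ (1 / (n : ℝ)), ‖x - x₀‖ ^ q / ‖z - x‖ ^ q) ≤ 2 / (2 - q) := by
  have h := average_ball_norm_sub_rpow_div_rpow_le volume (by linarith : 0 ≤ q)
    (by simpa [Complex.finrank_real_complex] using hq2) x₀ z (1 / n)
  simpa [Complex.finrank_real_complex, measureReal_def] using h

/-- For `1 < q < 2` and `Δ_n` the disk of radius `1/n` about `x₀`, the averaged potential
`w_n(z) = (1/m(Δ_n)) ∫_{Δ_n} |x-x₀|^q / |z-x|^q dm_x` is bounded by `2/(2-q)` for all `z`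
and all `n ≥ 1`. -/
theorem averaged_potential_bounded
    (q : ℝ) (hq1 : 1 < q) (hq2 : q < 2) (x₀ : ℂ) (n : ℕ) (hn : 0 < n) (z : ℂ) :
    (volume (ball x₀ (1 / (n : ℝ)))).toReal⁻¹ *
        (∫ x in ball x₀ (1 / (n : ℝ)), ‖x - x₀‖ ^ q / ‖z - x‖ ^ q) ≤ 2 / (2 - q) :=
  averaged_potential_bounded_general q hq1 hq2 x₀ n z
end

section
/- Let 1 < q < 2, let X be a compact subset of ℂ, let x₀ ∈ ℂ, and let k : ℂ → ℂ vanish off X and belong to L^q(X, dA). For each positive integer n let Δ_n = {x ∈ ℂ : |x − x₀| < 1/n}. Then (1/m(Δ_n)) ∫_{Δ_n} [ ∫_X |x − x₀|^q |k(z)|^q / |z − x|^q dm_z ] dm_x → 0 as n → ∞. -/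
/-!
By Tonelli, the average over `B(x₀, r)` equals `∫_X |k z|^q K_r(z) dz`, where `K_r(z)` is the
average over `B(x₀, r)` of `|x - x₀|^q / |z - x|^q`. The substitution `x = x₀ + r u` shows that
`K_r(z) = K(r⁻¹ (z - x₀))` for the single function `K(w)`, the average over the unit ball of
`|u|^q / |w - u|^q`. Since `q < 2`, `|w - u|^(-q)` is locally integrable, so `K` is bounded, and
`K(w) ≤ (|w| - 1)^(-q) → 0` as `|w| → ∞`. Hence `K_r(z) → 0` for every `z ≠ x₀`, and dominated
convergence with the integrable bound `|k|^q · sup K` gives the claim. The Bochner integrals of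
the statement are controlled through `ofReal (∫ f) ≤ ∫⁻ ofReal f`, which holds also when `f` is
not integrable.
-/

open MeasureTheory Metric Filter Set Module Topology
open scoped ENNReal

noncomputable section

section OfReal

variable {α : Type*} [MeasurableSpace α] {μ : Measure α}

theorem ofReal_integral_le_lintegral_ofReal (f : α → ℝ) :
    ENNReal.ofReal (∫ x, f x ∂μ) ≤ ∫⁻ x, ENNReal.ofReal (f x) ∂μ := by
  by_cases hf : Integrable f μ
  · rw [integral_eq_lintegral_pos_part_sub_lintegral_neg_part hf]
    exact (ENNReal.ofReal_le_ofReal (sub_le_self _ ENNReal.toReal_nonneg)).trans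
      ENNReal.ofReal_toReal_le
  · simp [integral_undef hf]

theorem ofReal_average_le_laverage (f : α → ℝ) :
    ENNReal.ofReal (⨍ x, f x ∂μ) ≤ ⨍⁻ x, ENNReal.ofReal (f x) ∂μ :=
  ofReal_integral_le_lintegral_ofReal f

theorem tendsto_zero_of_ofReal_le {ι : Type*} {l : Filter ι} {f : ι → ℝ} {u : ι → ℝ≥0∞}
    (hf : ∀ i, 0 ≤ f i) (hfu : ∀ i, ENNReal.ofReal (f i) ≤ u i) (hu : Tendsto u l (𝓝 0)) :
    Tendsto f l (𝓝 0) := by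
  have h : Tendsto (fun i => ENNReal.ofReal (f i)) l (𝓝 0) :=
    tendsto_of_tendsto_of_tendsto_of_le_of_le tendsto_const_nhds hu (fun _ => zero_le) hfu
  simpa [Function.comp_def, ENNReal.toReal_ofReal (hf _)] using
    (ENNReal.tendsto_toReal ENNReal.zero_ne_top).comp h

end OfReal

theorem setLIntegral_ball_comp_sub_right {G : Type*} [NormedAddCommGroup G] [MeasurableSpace G]
    [BorelSpace G] (μ : Measure G) [μ.IsAddRightInvariant] (w : G) (ρ : ℝ) (F : G → ℝ≥0∞) :
    ∫⁻ u in ball w ρ, F (u - w) ∂μ = ∫⁻ v in ball 0 ρ, F v ∂μ := by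
  rw [← (measurePreserving_sub_right μ w).setLIntegral_comp_preimage_emb
    (MeasurableEquiv.subRight w).measurableEmbedding F (ball 0 ρ)]
  congr 2
  ext u
  simp [dist_eq_norm]

section KernelAverage

variable {E : Type*} [NormedAddCommGroup E] [MeasurableSpace E] (μ : Measure E)

def unitBallKernelAverage (q : ℝ) (w : E) : ℝ≥0∞ :=
  ⨍⁻ u in ball (0 : E) 1, ENNReal.ofReal (‖u‖ ^ q / ‖w - u‖ ^ q) ∂μ

theorem unitBallKernelAverage_le [BorelSpace E] [μ.IsAddRightInvariant] {q : ℝ} (hq0 : 0 ≤ q)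
    (w : E) :
    unitBallKernelAverage μ q w ≤ (μ (ball 0 1))⁻¹ *
      (∫⁻ v in ball 0 1, ENNReal.ofReal (‖v‖ ^ (-q)) ∂μ + μ (ball 0 1)) := by
  rw [unitBallKernelAverage, setLAverage_eq, ENNReal.div_eq_inv_mul]
  gcongr
  have hpt : ∀ u ∈ ball (0 : E) 1, ENNReal.ofReal (‖u‖ ^ q / ‖w - u‖ ^ q) ≤
      (ball w 1).indicator (fun u => ENNReal.ofReal (‖u - w‖ ^ (-q))) u + 1 := by
    intro u hu
    have hkernel : ‖u‖ ^ q / ‖w - u‖ ^ q ≤ ‖u - w‖ ^ (-q) := by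
      rw [Real.rpow_neg (norm_nonneg _), norm_sub_rev, ← one_div]
      exact div_le_div_of_nonneg_right
        (Real.rpow_le_one (norm_nonneg _) (mem_ball_zero_iff.1 hu).le hq0) (by positivity)
    by_cases huw : u ∈ ball w 1
    · rw [indicator_of_mem huw]
      exact (ENNReal.ofReal_le_ofReal hkernel).trans le_self_add
    · rw [indicator_of_notMem huw, zero_add, ← ENNReal.ofReal_one]
      refine ENNReal.ofReal_le_ofReal (hkernel.trans ?_)
      refine Real.rpow_le_one_of_one_le_of_nonpos ?_ (neg_nonpos.2 hq0)
      simpa [dist_eq_norm] using huw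
  calc ∫⁻ u in ball 0 1, ENNReal.ofReal (‖u‖ ^ q / ‖w - u‖ ^ q) ∂μ
      ≤ ∫⁻ u in ball 0 1,
          ((ball w 1).indicator (fun u => ENNReal.ofReal (‖u - w‖ ^ (-q))) u + 1) ∂μ :=
        setLIntegral_mono' measurableSet_ball hpt
    _ = ∫⁻ u in ball 0 1 ∩ ball w 1, ENNReal.ofReal (‖u - w‖ ^ (-q)) ∂μ + μ (ball 0 1) := by
        rw [lintegral_add_right _ measurable_const, setLIntegral_const, one_mul,
          lintegral_indicator measurableSet_ball, Measure.restrict_restrict measurableSet_ball,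
          inter_comm]
    _ ≤ ∫⁻ u in ball w 1, ENNReal.ofReal (‖u - w‖ ^ (-q)) ∂μ + μ (ball 0 1) := by
        gcongr
        exact inter_subset_right
    _ = ∫⁻ v in ball 0 1, ENNReal.ofReal (‖v‖ ^ (-q)) ∂μ + μ (ball 0 1) := by
        rw [setLIntegral_ball_comp_sub_right μ w 1 fun v => ENNReal.ofReal (‖v‖ ^ (-q))]

end KernelAverage

section HaarBall

variable {E : Type*} [NormedAddCommGroup E] [NormedSpace ℝ E] [FiniteDimensional ℝ E]
  [MeasurableSpace E] [BorelSpace E] (μ : Measure E) [μ.IsAddHaarMeasure]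

theorem setLIntegral_ball_eq_mul_setLIntegral_unitBall (x₀ : E) {r : ℝ} (hr : 0 < r)
    (h : E → ℝ≥0∞) :
    ∫⁻ x in ball x₀ r, h x ∂μ =
      ENNReal.ofReal (r ^ finrank ℝ E) * ∫⁻ u in ball 0 1, h (x₀ + r • u) ∂μ := by
  let φ : E ≃ₜ E := (Homeomorph.smulOfNeZero r hr.ne').trans (Homeomorph.addLeft x₀)
  have hmap : μ.map φ = ENNReal.ofReal (r ^ finrank ℝ E)⁻¹ • μ := by
    rw [show (φ : E → E) = (x₀ + ·) ∘ (r • ·) from rfl,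
      ← Measure.map_map (measurable_const_add x₀) (measurable_const_smul r),
      Measure.map_addHaar_smul μ hr.ne', Measure.map_smul, map_add_left_eq_self,
      abs_of_pos (by positivity)]
  have hpre : φ ⁻¹' ball x₀ r = ball 0 1 := by
    ext u
    simp [φ, norm_smul, abs_of_pos hr, hr]
  let e : E ≃ᵐ E := φ.toMeasurableEquiv
  have hunit : ∫⁻ u in ball 0 1, h (x₀ + r • u) ∂μ = ∫⁻ x in ball x₀ r, h x ∂(μ.map e) := by
    rw [e.restrict_map, lintegral_map_equiv, ← hpre]; rfl
  rw [hunit, show μ.map e = μ.map φ from rfl, hmap, Measure.restrict_smul,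
    lintegral_smul_measure, smul_eq_mul, ← mul_assoc, ← ENNReal.ofReal_mul (by positivity),
    mul_inv_cancel₀ (by positivity), ENNReal.ofReal_one, one_mul]

theorem setLAverage_ball_eq_setLAverage_unitBall (x₀ : E) {r : ℝ} (hr : 0 < r)
    (h : E → ℝ≥0∞) :
    ⨍⁻ x in ball x₀ r, h x ∂μ = ⨍⁻ u in ball 0 1, h (x₀ + r • u) ∂μ := by
  have hc : ENNReal.ofReal (r ^ finrank ℝ E) ≠ 0 := by simp [hr]
  rw [setLAverage_eq, setLAverage_eq, setLIntegral_ball_eq_mul_setLIntegral_unitBall μ x₀ hr,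
    μ.addHaar_ball_of_pos x₀ hr, ENNReal.mul_div_mul_left _ _ hc ENNReal.ofReal_ne_top]

theorem setLIntegral_ball_rpow_neg_ne_top {q : ℝ} (hq0 : 0 ≤ q) (hqd : q < finrank ℝ E)
    (ρ : ℝ) : ∫⁻ v in ball 0 ρ, ENNReal.ofReal (‖v‖ ^ (-q)) ∂μ ≠ ∞ := by
  have hd : 0 < finrank ℝ E := by exact_mod_cast hq0.trans_lt hqd
  refine (Integrable.lintegral_lt_top ?_).ne
  refine integrableOn_ball_of_norm_le_rpow hd (C := 1) hqd (Eventually.of_forall fun v => ?_)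
    (by fun_prop : Measurable fun v : E => ‖v‖ ^ (-q)).aestronglyMeasurable
  rw [one_mul, Real.norm_of_nonneg (by positivity)]

variable {μ} {q : ℝ}

theorem setLAverage_ball_kernel_eq_unitBallKernelAverage (x₀ z : E) {r : ℝ} (hr : 0 < r) :
    ⨍⁻ x in ball x₀ r, ENNReal.ofReal (‖x - x₀‖ ^ q / ‖z - x‖ ^ q) ∂μ =
      unitBallKernelAverage μ q (r⁻¹ • (z - x₀)) := by
  rw [setLAverage_ball_eq_setLAverage_unitBall μ x₀ hr, unitBallKernelAverage]
  congr 1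
  funext u
  have hsub : z - (x₀ + r • u) = r • (r⁻¹ • (z - x₀) - u) := by
    rw [smul_sub, smul_inv_smul₀ hr.ne']
    abel
  rw [add_sub_cancel_left, hsub, norm_smul, norm_smul, Real.norm_of_nonneg hr.le,
    Real.mul_rpow hr.le (norm_nonneg _), Real.mul_rpow hr.le (norm_nonneg _),
    mul_div_mul_left _ _ (Real.rpow_pos_of_pos hr q).ne']

theorem measurable_unitBallKernelAverage : Measurable (unitBallKernelAverage μ q) := by
  unfold unitBallKernelAverage
  simp_rw [setLAverage_eq]
  have hkernel : Measurable fun p : E × E => ENNReal.ofReal (‖p.2‖ ^ q / ‖p.1 - p.2‖ ^ q) :=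
    Measurable.ennreal_ofReal (by fun_prop)
  exact hkernel.lintegral_prod_right'.div_const _

theorem unitBallKernelAverage_le_of_one_lt_norm (hq0 : 0 ≤ q) {w : E} (hw : 1 < ‖w‖) :
    unitBallKernelAverage μ q w ≤ ENNReal.ofReal ((‖w‖ - 1) ^ (-q)) := by
  have hpt : ∀ u ∈ ball (0 : E) 1, ENNReal.ofReal (‖u‖ ^ q / ‖w - u‖ ^ q) ≤
      ENNReal.ofReal ((‖w‖ - 1) ^ (-q)) := by
    intro u hu
    have hu1 : ‖u‖ < 1 := mem_ball_zero_iff.1 hu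
    have hwu : ‖w‖ - 1 ≤ ‖w - u‖ := by linarith [norm_sub_norm_le w u]
    refine ENNReal.ofReal_le_ofReal ?_
    rw [Real.rpow_neg (by linarith), ← one_div]
    exact div_le_div₀ zero_le_one (Real.rpow_le_one (norm_nonneg _) hu1.le hq0)
      (Real.rpow_pos_of_pos (by linarith) q) (Real.rpow_le_rpow (by linarith) hwu hq0)
  calc unitBallKernelAverage μ q w
      ≤ ⨍⁻ _u in ball (0 : E) 1, ENNReal.ofReal ((‖w‖ - 1) ^ (-q)) ∂μ :=
        laverage_mono_ae ((ae_restrict_iff' measurableSet_ball).2 (Eventually.of_forall hpt))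
    _ = ENNReal.ofReal ((‖w‖ - 1) ^ (-q)) :=
        setLAverage_const (measure_ball_pos μ 0 one_pos).ne' measure_ball_lt_top.ne _

theorem tendsto_unitBallKernelAverage {ι : Type*} {l : Filter ι} {w : ι → E} (hq : 0 < q)
    (hw : Tendsto (fun i => ‖w i‖) l atTop) :
    Tendsto (fun i => unitBallKernelAverage μ q (w i)) l (𝓝 0) := by
  have hbound : Tendsto (fun i => ENNReal.ofReal ((‖w i‖ - 1) ^ (-q))) l (𝓝 0) := by
    simpa only [← sub_eq_add_neg, ENNReal.ofReal_zero, Function.comp_def] using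
      ENNReal.tendsto_ofReal
        ((tendsto_rpow_neg_atTop hq).comp (tendsto_atTop_add_const_right _ (-1) hw))
  refine tendsto_of_tendsto_of_tendsto_of_le_of_le' tendsto_const_nhds hbound
    (Eventually.of_forall fun _ => zero_le) ?_
  filter_upwards [hw.eventually_gt_atTop 1] with i hi
  exact unitBallKernelAverage_le_of_one_lt_norm hq.le hi

theorem setLAverage_ball_lintegral_kernel_eq_lintegral_unitBallKernelAverage {ν : Measure E}
    [SFinite ν] {g : E → ℝ≥0∞} (hg : AEMeasurable g ν) (x₀ : E) {r : ℝ} (hr : 0 < r) :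
    ⨍⁻ x in ball x₀ r, ∫⁻ z, g z * ENNReal.ofReal (‖x - x₀‖ ^ q / ‖z - x‖ ^ q) ∂ν ∂μ =
      ∫⁻ z, g z * unitBallKernelAverage μ q (r⁻¹ • (z - x₀)) ∂ν := by
  have hkernel : Measurable fun p : E × E => ENNReal.ofReal (‖p.1 - x₀‖ ^ q / ‖p.2 - p.1‖ ^ q) :=
    Measurable.ennreal_ofReal (by fun_prop)
  simp_rw [← setLAverage_ball_kernel_eq_unitBallKernelAverage x₀ _ hr, laverage_eq']
  rw [lintegral_lintegral_swap (hg.comp_snd.mul hkernel.aemeasurable)]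
  congr 1
  funext z
  exact lintegral_const_mul _ (Measurable.ennreal_ofReal (by fun_prop))

theorem tendsto_setLAverage_ball_lintegral_kernel (hq : 0 < q) (hqd : q < finrank ℝ E)
    {ν : Measure E} [SFinite ν] (hν : ν ≪ μ) {g : E → ℝ≥0∞} (hg : AEMeasurable g ν)
    (hgi : ∫⁻ z, g z ∂ν ≠ ∞) (x₀ : E) :
    Tendsto (fun r => ⨍⁻ x in ball x₀ r,
        ∫⁻ z, g z * ENNReal.ofReal (‖x - x₀‖ ^ q / ‖z - x‖ ^ q) ∂ν ∂μ) (𝓝[>] 0) (𝓝 0) := by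
  set C := (μ (ball 0 1))⁻¹ * (∫⁻ v in ball 0 1, ENNReal.ofReal (‖v‖ ^ (-q)) ∂μ + μ (ball 0 1))
  have hC : C ≠ ∞ := ENNReal.mul_ne_top (ENNReal.inv_ne_top.2 (measure_ball_pos μ 0 one_pos).ne')
    (ENNReal.add_ne_top.2 ⟨setLIntegral_ball_rpow_neg_ne_top μ hq.le hqd 1,
      measure_ball_lt_top.ne⟩)
  have : Nontrivial E := Module.nontrivial_of_finrank_pos (R := ℝ) (by exact_mod_cast hq.trans hqd)
  have hlim : ∀ᵐ z ∂ν, Tendsto (fun r : ℝ => g z * unitBallKernelAverage μ q (r⁻¹ • (z - x₀)))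
      (𝓝[>] 0) (𝓝 0) := by
    filter_upwards [ae_lt_top' hg hgi, measure_eq_zero_iff_ae_notMem.1 (hν (measure_singleton x₀))]
      with z hgz hz
    have hnorm : Tendsto (fun r : ℝ => ‖r⁻¹ • (z - x₀)‖) (𝓝[>] 0) atTop := by
      refine (tendsto_inv_nhdsGT_zero.atTop_mul_const
        (norm_pos_iff.2 (sub_ne_zero.2 hz))).congr' ?_
      filter_upwards [self_mem_nhdsWithin] with r hr
      rw [norm_smul, Real.norm_of_nonneg (inv_nonneg.2 (le_of_lt hr))]
    simpa using ENNReal.Tendsto.const_mul (tendsto_unitBallKernelAverage hq hnorm)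
      (Or.inr hgz.ne)
  have hdom := tendsto_lintegral_filter_of_dominated_convergence' (fun z => g z * C)
    (F := fun (r : ℝ) z => g z * unitBallKernelAverage μ q (r⁻¹ • (z - x₀)))
    (Eventually.of_forall fun r => hg.mul
      (measurable_unitBallKernelAverage.comp (by fun_prop)).aemeasurable)
    (Eventually.of_forall fun r => Eventually.of_forall fun z => by
      gcongr
      exact unitBallKernelAverage_le μ hq.le _)
    (by rw [lintegral_mul_const'' _ hg]; exact ENNReal.mul_ne_top hgi hC) hlim
  rw [lintegral_zero] at hdom
  refine hdom.congr' ?_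
  filter_upwards [self_mem_nhdsWithin] with r hr
  exact (setLAverage_ball_lintegral_kernel_eq_lintegral_unitBallKernelAverage hg x₀ hr).symm

end HaarBall

theorem averaged_double_integral_tendsto_zero_general
    (q : ℝ) (hq1 : 1 < q) (hq2 : q < 2) (X : Set ℂ)
    (x₀ : ℂ) (k : ℂ → ℂ)
    (hkLq : MemLp k (ENNReal.ofReal q) (volume.restrict X)) :
    Tendsto (fun n : ℕ =>
        (volume (ball x₀ (1 / (n : ℝ)))).toReal⁻¹ *
          ∫ x in ball x₀ (1 / (n : ℝ)),
            (∫ z in X, ‖x - x₀‖ ^ q * ‖k z‖ ^ q / ‖z - x‖ ^ q))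
      atTop (nhds 0) := by
  have hq : 0 < q := by linarith
  have hdim : q < finrank ℝ ℂ := by rw [Complex.finrank_real_complex]; exact_mod_cast hq2
  have hg : AEMeasurable (fun z => ENNReal.ofReal (‖k z‖ ^ q)) (volume.restrict X) :=
    (hkLq.1.norm.aemeasurable.pow_const q).ennreal_ofReal
  have hgi : ∫⁻ z in X, ENNReal.ofReal (‖k z‖ ^ q) ≠ ∞ := by
    have h := hkLq.integrable_norm_rpow (by simpa using hq) ENNReal.ofReal_ne_top
    rw [ENNReal.toReal_ofReal hq.le] at h
    exact h.lintegral_lt_top.ne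
  have hradius : Tendsto (fun n : ℕ => 1 / (n : ℝ)) atTop (𝓝[>] 0) :=
    tendsto_nhdsWithin_iff.2 ⟨tendsto_one_div_atTop_nhds_zero_nat,
      eventually_atTop.2 ⟨1, fun n hn => by simp only [mem_Ioi]; positivity⟩⟩
  have hlim := tendsto_setLAverage_ball_lintegral_kernel hq hdim
    Measure.restrict_le_self.absolutelyContinuous hg hgi x₀
  refine tendsto_zero_of_ofReal_le (fun n => by positivity) (fun n => ?_) (hlim.comp hradius)
  rw [← measureReal_def, ← smul_eq_mul, ← setAverage_eq]
  refine (ofReal_average_le_laverage _).trans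
    (laverage_mono_ae (Eventually.of_forall fun x => ?_))
  refine (ofReal_integral_le_lintegral_ofReal _).trans_eq (lintegral_congr fun z => ?_)
  rw [mul_comm (‖x - x₀‖ ^ q), mul_div_assoc, ENNReal.ofReal_mul (by positivity)]

/-- For `1 < q < 2` and `k ∈ L^q(X, dA)` vanishing off the compact set `X`, the averages
over the disks `Δ_n = B(x₀, 1/n)` of `∫_X |x-x₀|^q |k(z)|^q / |z-x|^q dm_z` tend to `0`
as `n → ∞`. -/
theorem averaged_double_integral_tendsto_zero
    (q : ℝ) (hq1 : 1 < q) (hq2 : q < 2) (X : Set ℂ) (hX : IsCompact X)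
    (x₀ : ℂ) (k : ℂ → ℂ) (hk0 : ∀ z ∉ X, k z = 0)
    (hkLq : MemLp k (ENNReal.ofReal q) (volume.restrict X)) :
    Tendsto (fun n : ℕ =>
        (volume (ball x₀ (1 / (n : ℝ)))).toReal⁻¹ *
          ∫ x in ball x₀ (1 / (n : ℝ)),
            (∫ z in X, ‖x - x₀‖ ^ q * ‖k z‖ ^ q / ‖z - x‖ ^ q))
      atTop (nhds 0) :=
  averaged_double_integral_tendsto_zero_general q hq1 hq2 X x₀ k hkLq
end
end

section
/- Let 1 < q < 2, let X be a compact subset of ℂ, let x₀ ∈ ℂ, let k : ℂ → ℂ vanish off X and belong to L^q(X, dA), and let δ > 0. Let E_δ = {x ∈ ℂ : ∫_X |x − x₀|^q |k(z)|^q / |z − x|^q dm_z < δ}. Then E_δ has full area density at x₀. -/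
open MeasureTheory Metric Filter

noncomputable section

/-!
By Markov's inequality and Tonelli, `δ · m(B(x₀, r) \ E_δ) / m(B(x₀, r))` is at most
`∫_X |k|^q A_r`, where `A_r(z)` is the average over `B(x₀, r)` of `|x - x₀|^q / |z - x|^q`.
If `|z - x₀| ≤ 2r`, then `A_r(z) ≲ r^(q-2) ∫_{B(z, 3r)} |z - x|^(-q) dx`, which is bounded since
`q < 2`; otherwise `|z - x| ≥ |z - x₀| / 2` on the ball, so `A_r(z) ≤ (2r / |z - x₀|)^q`.
Hence `A_r` is bounded uniformly and tends to `0` off `x₀`, and dominated convergence concludes.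
-/

open Set
open scoped ENNReal Topology

lemma lintegral_Ioo_rpow {s c : ℝ} (hs : -1 < s) (hc : 0 ≤ c) :
    ∫⁻ t in Ioo 0 c, ENNReal.ofReal (t ^ s) = ENNReal.ofReal (c ^ (s + 1) / (s + 1)) := by
  rw [setLIntegral_congr Ioo_ae_eq_Ioc, ← ofReal_integral_eq_lintegral_ofReal,
    ← intervalIntegral.integral_of_le hc, integral_rpow (Or.inl hs),
    Real.zero_rpow (by linarith), sub_zero]
  · exact (intervalIntegral.intervalIntegrable_rpow' hs).1
  · filter_upwards [ae_restrict_mem measurableSet_Ioc] with t ht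
    exact Real.rpow_nonneg ht.1.le s

lemma Complex.lintegral_ball_zero_norm_rpow {s c : ℝ} (hs : -2 < s) (hc : 0 ≤ c) :
    ∫⁻ x in ball (0 : ℂ) c, ENNReal.ofReal (‖x‖ ^ s)
      = ENNReal.ofReal (2 * Real.pi * c ^ (s + 2) / (s + 2)) := by
  have polar : ∀ p ∈ Ioi 0 ×ˢ Ioo (-Real.pi) Real.pi,
      ENNReal.ofReal p.1 • (ball (0 : ℂ) c).indicator (fun x => ENNReal.ofReal (‖x‖ ^ s))
        (Complex.polarCoord.symm p)
        = (Ioo 0 c).indicator (fun t => ENNReal.ofReal (t ^ (s + 1))) p.1 * 1 := by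
    rintro ⟨r, θ⟩ ⟨hr, -⟩
    have hr : 0 < r := hr
    by_cases hrc : r < c
    · rw [indicator_of_mem (by simpa [abs_of_pos hr] using hrc),
        indicator_of_mem (show r ∈ Ioo 0 c from ⟨hr, hrc⟩), Complex.norm_polarCoord_symm,
        abs_of_pos hr, smul_eq_mul, mul_one, ← ENNReal.ofReal_mul hr.le,
        Real.rpow_add_one hr.ne', mul_comm]
    · rw [indicator_of_notMem (by simpa [abs_of_pos hr] using hrc),
        indicator_of_notMem (fun h => hrc h.2)]
      simp
  rw [← lintegral_indicator measurableSet_ball, ← Complex.lintegral_comp_polarCoord_symm,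
    polarCoord_target, setLIntegral_congr_fun (measurableSet_Ioi.prod measurableSet_Ioo) polar,
    Measure.volume_eq_prod, ← Measure.prod_restrict,
    lintegral_prod_mul (g := fun _ => 1)
      ((by fun_prop : Measurable _).indicator measurableSet_Ioo).aemeasurable aemeasurable_const,
    lintegral_indicator measurableSet_Ioo, Measure.restrict_restrict measurableSet_Ioo,
    Ioo_inter_Ioi, max_self, lintegral_Ioo_rpow (by linarith) hc, setLIntegral_const, one_mul,
    Real.volume_Ioo, ← ENNReal.ofReal_mul (div_nonneg (Real.rpow_nonneg hc _) (by linarith))]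
  ring_nf

lemma Complex.lintegral_ball_norm_sub_rpow {s c : ℝ} (hs : -2 < s) (hc : 0 ≤ c) (w : ℂ) :
    ∫⁻ x in ball w c, ENNReal.ofReal (‖x - w‖ ^ s)
      = ENNReal.ofReal (2 * Real.pi * c ^ (s + 2) / (s + 2)) := by
  rw [← Complex.lintegral_ball_zero_norm_rpow hs hc, ← lintegral_indicator measurableSet_ball,
    ← lintegral_indicator measurableSet_ball, ← lintegral_add_right_eq_self _ w]
  congr 1 with x
  simp only [indicator, mem_ball, dist_eq_norm, sub_zero, add_sub_cancel_right]

def kernelAverage (q : ℝ) (x₀ : ℂ) (r : ℝ) (z : ℂ) : ℝ≥0∞ :=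
  ⨍⁻ x in ball x₀ r, ENNReal.ofReal (‖x - x₀‖ ^ q / ‖z - x‖ ^ q) ∂volume

section kernelAverage

variable {q r : ℝ} {x₀ z : ℂ}

lemma measurable_kernelAverage : Measurable (kernelAverage q x₀ r) := by
  unfold kernelAverage
  simp only [setLAverage_eq]
  exact (Measurable.lintegral_prod_left (by fun_prop)).div_const _

lemma kernelAverage_le_of_near (hq0 : 0 ≤ q) (hq2 : q < 2) (hr : 0 < r)
    (hz : ‖z - x₀‖ ≤ 2 * r) :
    kernelAverage q x₀ r z ≤ ENNReal.ofReal (2 * 3 ^ (2 - q) / (2 - q)) := by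
  have hsub : ball x₀ r ⊆ ball z (3 * r) := fun x hx => by
    rw [mem_ball, dist_eq_norm] at hx ⊢
    have := norm_sub_le_norm_sub_add_norm_sub x x₀ z
    rw [norm_sub_rev x₀] at this
    linarith
  have hpt : ∀ x ∈ ball x₀ r, ENNReal.ofReal (‖x - x₀‖ ^ q / ‖z - x‖ ^ q)
      ≤ ENNReal.ofReal (r ^ q) * ENNReal.ofReal (‖x - z‖ ^ (-q)) := fun x hx => by
    rw [← ENNReal.ofReal_mul (by positivity), norm_sub_rev x z, Real.rpow_neg (norm_nonneg _),
      div_eq_mul_inv]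
    gcongr
    exact (mem_ball_iff_norm.1 hx).le
  have hV : volume (ball x₀ r) = ENNReal.ofReal (Real.pi * r ^ 2) := by
    rw [Complex.volume_ball, ← ENNReal.ofReal_pow hr.le, ← ENNReal.ofReal_coe_nnreal,
      NNReal.coe_real_pi, ← ENNReal.ofReal_mul (by positivity), mul_comm]
  calc kernelAverage q x₀ r z
      ≤ (∫⁻ x in ball z (3 * r), ENNReal.ofReal (r ^ q) * ENNReal.ofReal (‖x - z‖ ^ (-q)))
          / volume (ball x₀ r) := by
        rw [kernelAverage, setLAverage_eq]
        gcongr ?_ / _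
        exact (setLIntegral_mono' measurableSet_ball hpt).trans (lintegral_mono_set hsub)
    _ = ENNReal.ofReal
          (r ^ q * (2 * Real.pi * (3 * r) ^ (2 - q) / (2 - q)) / (Real.pi * r ^ 2)) := by
        rw [lintegral_const_mul' _ _ ENNReal.ofReal_ne_top,
          Complex.lintegral_ball_norm_sub_rpow (by linarith) (by positivity), hV,
          ← ENNReal.ofReal_mul (by positivity), ENNReal.ofReal_div_of_pos (by positivity),
          neg_add_eq_sub]
    _ = ENNReal.ofReal (2 * 3 ^ (2 - q) / (2 - q)) := by
        congr 1
        rw [Real.mul_rpow (by norm_num) hr.le]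
        have hpow : r ^ q * r ^ (2 - q) = r ^ 2 := by
          rw [← Real.rpow_add hr, add_sub_cancel, Real.rpow_two]
        have h2q : 2 - q ≠ 0 := by linarith
        field_simp
        linear_combination hpow

lemma kernelAverage_le_of_far (hq0 : 0 ≤ q) (hr : 0 < r) (hz : 2 * r ≤ ‖z - x₀‖) :
    kernelAverage q x₀ r z ≤ ENNReal.ofReal ((2 * r / ‖z - x₀‖) ^ q) := by
  have hpt : ∀ x ∈ ball x₀ r, ENNReal.ofReal (‖x - x₀‖ ^ q / ‖z - x‖ ^ q)
      ≤ ENNReal.ofReal ((2 * r / ‖z - x₀‖) ^ q) := fun x hx => by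
    have hx : ‖x - x₀‖ < r := mem_ball_iff_norm.1 hx
    have hzx : ‖z - x₀‖ / 2 ≤ ‖z - x‖ := by
      linarith [norm_sub_le_norm_sub_add_norm_sub z x x₀]
    rw [← Real.div_rpow (norm_nonneg _) (norm_nonneg _)]
    refine ENNReal.ofReal_le_ofReal (Real.rpow_le_rpow (by positivity) ?_ hq0)
    calc ‖x - x₀‖ / ‖z - x‖ ≤ r / (‖z - x₀‖ / 2) := by gcongr; linarith
      _ = 2 * r / ‖z - x₀‖ := by ring
  have hV₀ : volume (ball x₀ r) ≠ 0 := (measure_ball_pos volume x₀ hr).ne'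
  calc kernelAverage q x₀ r z
      ≤ ⨍⁻ _ in ball x₀ r, ENNReal.ofReal ((2 * r / ‖z - x₀‖) ^ q) ∂volume :=
        laverage_mono_ae ((ae_restrict_iff' measurableSet_ball).2 (.of_forall hpt))
    _ = _ := setLAverage_const hV₀ measure_ball_lt_top.ne _

lemma kernelAverage_le (hq0 : 0 ≤ q) (hq2 : q < 2) (hr : 0 < r) :
    kernelAverage q x₀ r z ≤ ENNReal.ofReal (max (2 * 3 ^ (2 - q) / (2 - q)) 1) := by
  rcases le_total ‖z - x₀‖ (2 * r) with hz | hz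
  · exact (kernelAverage_le_of_near hq0 hq2 hr hz).trans (by gcongr; exact le_max_left _ _)
  · refine (kernelAverage_le_of_far hq0 hr hz).trans (ENNReal.ofReal_le_ofReal ?_)
    refine (Real.rpow_le_one (by positivity) ?_ hq0).trans (le_max_right _ _)
    exact div_le_one_of_le₀ hz (norm_nonneg _)

lemma tendsto_kernelAverage (hq0 : 0 < q) (hz : z ≠ x₀) :
    Tendsto (fun r => kernelAverage q x₀ r z) (𝓝[>] 0) (𝓝 0) := by
  have hz' : 0 < ‖z - x₀‖ := norm_pos_iff.2 (sub_ne_zero.2 hz)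
  have hbound : Tendsto (fun r : ℝ => ENNReal.ofReal ((2 * r / ‖z - x₀‖) ^ q)) (𝓝 0) (𝓝 0) := by
    have hcont : Continuous fun r : ℝ => ENNReal.ofReal ((2 * r / ‖z - x₀‖) ^ q) :=
      ENNReal.continuous_ofReal.comp
        ((by fun_prop : Continuous fun r : ℝ => 2 * r / ‖z - x₀‖).rpow_const
          fun _ => Or.inr hq0.le)
    simpa [Real.zero_rpow hq0.ne'] using hcont.tendsto 0
  have hfar : ∀ᶠ r in 𝓝[>] 0, 0 < r ∧ 2 * r ≤ ‖z - x₀‖ := by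
    filter_upwards [self_mem_nhdsWithin,
      nhdsWithin_le_nhds (Iio_mem_nhds (half_pos hz'))] with r hr hr'
    exact ⟨hr, by linarith [mem_Iio.1 hr']⟩
  refine tendsto_of_tendsto_of_tendsto_of_le_of_le' tendsto_const_nhds
    (hbound.mono_left nhdsWithin_le_nhds) (.of_forall fun _ => zero_le) ?_
  filter_upwards [hfar] with r hr using kernelAverage_le_of_far hq0.le hr.1 hr.2

lemma tendsto_lintegral_mul_kernelAverage {μ : Measure ℂ} (hq0 : 0 < q) (hq2 : q < 2)
    {g : ℂ → ℝ≥0∞} (hg : AEMeasurable g μ) (hgi : ∫⁻ z, g z ∂μ ≠ ∞) (hμ : μ {x₀} = 0) :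
    Tendsto (fun r => ∫⁻ z, g z * kernelAverage q x₀ r z ∂μ) (𝓝[>] 0) (𝓝 0) := by
  set C := ENNReal.ofReal (max (2 * 3 ^ (2 - q) / (2 - q)) 1)
  have hdom : ∀ᶠ r in 𝓝[>] 0, ∀ᵐ z ∂μ, g z * kernelAverage q x₀ r z ≤ C * g z :=
    eventually_mem_nhdsWithin.mono fun r hr => .of_forall fun z => by
      rw [mul_comm C]
      exact mul_le_mul_right (kernelAverage_le hq0.le hq2 hr) _
  have hlim : ∀ᵐ z ∂μ, Tendsto (fun r => g z * kernelAverage q x₀ r z) (𝓝[>] 0) (𝓝 0) :=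
    (measure_eq_zero_iff_ae_notMem.1 hμ).and (ae_lt_top' hg hgi) |>.mono fun z hz => by
      simpa only [mul_zero] using
        ENNReal.Tendsto.const_mul (tendsto_kernelAverage hq0 hz.1) (Or.inr hz.2.ne)
  simpa using tendsto_lintegral_filter_of_dominated_convergence' (f := 0) (fun z => C * g z)
    (.of_forall fun r => hg.mul measurable_kernelAverage.aemeasurable) hdom
    (by rw [lintegral_const_mul' _ _ ENNReal.ofReal_ne_top]
        exact ENNReal.mul_ne_top ENNReal.ofReal_ne_top hgi)
    hlim

end kernelAverage

def weightedPotential (q : ℝ) (X : Set ℂ) (k : ℂ → ℂ) (x₀ x : ℂ) : ℝ :=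
  ∫ z in X, ‖x - x₀‖ ^ q * ‖k z‖ ^ q / ‖z - x‖ ^ q

section weightedPotential

variable {q : ℝ} {x₀ : ℂ} {X : Set ℂ} {k : ℂ → ℂ}

lemma aemeasurable_weightedPotential_integrand {μ : Measure ℂ} [SFinite μ]
    (hk : AEStronglyMeasurable k (volume.restrict X)) :
    AEMeasurable (fun p : ℂ × ℂ => ENNReal.ofReal (‖p.1 - x₀‖ ^ q * ‖k p.2‖ ^ q / ‖p.2 - p.1‖ ^ q))
      (μ.prod (volume.restrict X)) := by
  have := hk.aemeasurable.comp_snd (μ := μ)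
  fun_prop

lemma lintegral_ball_weightedPotential_integrand (hq0 : 0 ≤ q)
    (hk : AEStronglyMeasurable k (volume.restrict X)) (r : ℝ) :
    ∫⁻ x in ball x₀ r, ∫⁻ z in X, ENNReal.ofReal (‖x - x₀‖ ^ q * ‖k z‖ ^ q / ‖z - x‖ ^ q)
      = volume (ball x₀ r) * ∫⁻ z in X, ‖k z‖ₑ ^ q * kernelAverage q x₀ r z := by
  rw [lintegral_lintegral_swap (aemeasurable_weightedPotential_integrand hk),
    ← lintegral_const_mul' _ _ measure_ball_lt_top.ne]
  refine lintegral_congr fun z => ?_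
  rw [mul_left_comm, kernelAverage, measure_mul_setLAverage _ measure_ball_lt_top.ne,
    ← lintegral_const_mul' _ _ (ENNReal.rpow_ne_top_of_nonneg hq0 enorm_ne_top)]
  refine lintegral_congr fun x => ?_
  rw [mul_comm (‖x - x₀‖ ^ q), mul_div_assoc, ENNReal.ofReal_mul (by positivity),
    ← ENNReal.ofReal_rpow_of_nonneg (norm_nonneg _) hq0, ofReal_norm]

lemma mul_volume_ball_diff_sublevel_le (hq0 : 0 ≤ q)
    (hk : AEStronglyMeasurable k (volume.restrict X)) (δ r : ℝ) :
    ENNReal.ofReal δ *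
        volume (ball x₀ r \ {x | weightedPotential q X k x₀ x < δ})
      ≤ volume (ball x₀ r) * ∫⁻ z in X, ‖k z‖ₑ ^ q * kernelAverage q x₀ r z := by
  set F : ℂ → ℝ≥0∞ := fun x =>
    ∫⁻ z in X, ENNReal.ofReal (‖x - x₀‖ ^ q * ‖k z‖ ^ q / ‖z - x‖ ^ q)
  have hsub : ball x₀ r \ {x | weightedPotential q X k x₀ x < δ}
      ⊆ {x | ENNReal.ofReal δ ≤ F x} := by
    rintro x ⟨-, hx⟩
    rw [mem_ofPred_eq, not_lt] at hx
    calc ENNReal.ofReal δ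
        ≤ ‖weightedPotential q X k x₀ x‖ₑ := by
          rw [Real.enorm_eq_ofReal_abs]
          exact ENNReal.ofReal_le_ofReal (hx.trans (le_abs_self _))
      _ ≤ ∫⁻ z in X, ‖‖x - x₀‖ ^ q * ‖k z‖ ^ q / ‖z - x‖ ^ q‖ₑ :=
          enorm_integral_le_lintegral_enorm _
      _ = F x := lintegral_congr fun z => Real.enorm_of_nonneg (by positivity)
  calc _ ≤ ENNReal.ofReal δ * volume.restrict (ball x₀ r) {x | ENNReal.ofReal δ ≤ F x} := by
        gcongr ENNReal.ofReal δ * ?_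
        exact (measure_mono (subset_inter hsub sdiff_subset)).trans (Measure.le_restrict_apply _ _)
    _ ≤ ∫⁻ x in ball x₀ r, F x := mul_meas_ge_le_lintegral₀
        (aemeasurable_weightedPotential_integrand hk).lintegral_prod_right' _
    _ = _ := lintegral_ball_weightedPotential_integrand hq0 hk r

lemma tendsto_volume_ball_diff_sublevel_div (hq0 : 0 < q) (hq2 : q < 2)
    (hk : AEStronglyMeasurable k (volume.restrict X)) (hkq : ∫⁻ z in X, ‖k z‖ₑ ^ q ≠ ∞)
    {δ : ℝ} (hδ : 0 < δ) :
    Tendsto (fun r => volume (ball x₀ r \ {x | weightedPotential q X k x₀ x < δ})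
        / volume (ball x₀ r)) (𝓝[>] 0) (𝓝 0) := by
  have hδ' : ENNReal.ofReal δ ≠ 0 := (ENNReal.ofReal_pos.2 hδ).ne'
  have hlim := ENNReal.Tendsto.const_mul (tendsto_lintegral_mul_kernelAverage (x₀ := x₀) hq0 hq2
    (by fun_prop) hkq (measure_singleton x₀)) (Or.inr (ENNReal.inv_ne_top.2 hδ'))
  rw [mul_zero] at hlim
  refine tendsto_of_tendsto_of_tendsto_of_le_of_le tendsto_const_nhds hlim (fun _ => zero_le)
    fun r => ENNReal.div_le_of_le_mul ?_
  have hmarkov := mul_volume_ball_diff_sublevel_le (x₀ := x₀) hq0.le hk δ r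
  calc _ = (ENNReal.ofReal δ)⁻¹ * (ENNReal.ofReal δ * _) :=
        (ENNReal.inv_mul_cancel_left hδ' ENNReal.ofReal_ne_top).symm
    _ ≤ _ := mul_le_mul_right hmarkov _
    _ = _ := by ring

end weightedPotential

theorem sublevel_set_full_density_general
    (q : ℝ) (hq1 : 1 < q) (hq2 : q < 2) (X : Set ℂ)
    (x₀ : ℂ) (k : ℂ → ℂ)
    (hkLq : MemLp k (ENNReal.ofReal q) (volume.restrict X))
    (δ : ℝ) (hδ : 0 < δ) :
    FullAreaDensityAt
      {x : ℂ | (∫ z in X, ‖x - x₀‖ ^ q * ‖k z‖ ^ q / ‖z - x‖ ^ q) < δ} x₀ := by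
  have hq0 : 0 < q := zero_lt_one.trans hq1
  have hkq : ∫⁻ z in X, ‖k z‖ₑ ^ q ≠ ∞ := by
    simpa [ENNReal.toReal_ofReal hq0.le] using (lintegral_rpow_enorm_lt_top_of_eLpNorm_lt_top
      (by simpa using hq0) ENNReal.ofReal_ne_top hkLq.2).ne
  have hn : Tendsto (fun n : ℕ => 1 / (n : ℝ)) atTop (𝓝[>] 0) :=
    tendsto_nhdsWithin_iff.2 ⟨tendsto_one_div_atTop_nhds_zero_nat,
      (eventually_gt_atTop 0).mono fun n hn => by simp [hn]⟩
  exact (tendsto_volume_ball_diff_sublevel_div hq0 hq2 hkLq.1 hkq hδ).comp hn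

/-- For `1 < q < 2`, `k ∈ L^q(X, dA)` vanishing off the compact set `X`, and `δ > 0`, the
set `E_δ = {x : ∫_X |x-x₀|^q |k(z)|^q / |z-x|^q dm_z < δ}` has full area density at `x₀`. -/
theorem sublevel_set_full_density
    (q : ℝ) (hq1 : 1 < q) (hq2 : q < 2) (X : Set ℂ) (hX : IsCompact X)
    (x₀ : ℂ) (k : ℂ → ℂ) (hk0 : ∀ z ∉ X, k z = 0)
    (hkLq : MemLp k (ENNReal.ofReal q) (volume.restrict X))
    (δ : ℝ) (hδ : 0 < δ) :
    FullAreaDensityAt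
      {x : ℂ | (∫ z in X, ‖x - x₀‖ ^ q * ‖k z‖ ^ q / ‖z - x‖ ^ q) < δ} x₀ :=
  sublevel_set_full_density_general q hq1 hq2 X x₀ k hkLq δ hδ
end
end

section
/- Let X be a compact subset of ℂ, let 2 < p < ∞ with conjugate exponent q = p/(p−1), let x₀ ∈ X, and let 0 < δ₀ < 1. Let k₁ : ℂ → ℂ vanish off X, belong to L^q(X, dA), and satisfy ∫_X f(z) k₁(z) dA_z = f′(x₀) for every rational function f with poles off X, and set k(z) = (z − x₀)k₁(z). Let x ∈ ℂ satisfy ‖(x − x₀)k₁(z)/(z − x)‖_{L^q(dA_z)} ≤ δ₀ and |x − x₀| · ∫ |k(z)|/|z − x| dA_z < δ₀, and set c = ∫ (z − x₀)k(z)/(z − x) dA_z. Then for every G ∈ L^p(X, dA) with ∫_X G(z) k(z) dA_z = 0 and ∫_X G(z) k₁(z) dA_z = 0, one has |(1/c) ∫_X G(z)·(z − x₀)k(z)/(z − x) dA_z| ≤ (δ₀/(1 − δ₀)) · |x − x₀| · ‖G‖_p. -/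
open MeasureTheory Metric Filter

noncomputable section

/-- A rational function with poles off `X`: a quotient of polynomials whose
denominator has no zeros on `X`. -/
def RatFn (X : Set ℂ) (f : ℂ → ℂ) : Prop :=
  ∃ P Q : Polynomial ℂ, (∀ z ∈ X, Q.eval z ≠ 0) ∧ f = fun z => P.eval z / Q.eval z

/-!
Write `a = x - x₀`. Off the null set `{x}` one has `(z - x₀)/(z - x) = 1 + a/(z - x)`.
Applied twice, and combined with the two orthogonality relations for `G`, this collapses the
numerator to `a ∫ G h` with `h z = a k₁ z/(z - x)`, which Hölder bounds by `|a| δ₀ ‖G‖_p`.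
Applied once to `c`, it gives `c = ∫ (z - x₀) k₁ + a ∫ k/(z - x) = 1 + a ∫ k/(z - x)`, the
first integral being the derivation applied to `z ↦ z - x₀`; hence `|c - 1| < δ₀`.
-/

lemma ratFn_sub_const (X : Set ℂ) (x₀ : ℂ) : RatFn X (fun z => z - x₀) :=
  ⟨Polynomial.X - Polynomial.C x₀, 1, fun _ _ => by simp, by simp⟩

lemma sub_mul_div_sub_of_ne {K : Type*} [Field K] {x x₀ z : K} (hz : z ≠ x) (u : K) :
    (z - x₀) * u / (z - x) = u + (x - x₀) * u / (z - x) := by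
  field_simp [sub_ne_zero.2 hz]
  ring

lemma MeasureTheory.MemLp.sub_mul_of_isCompact {μ : Measure ℂ} {p : ENNReal} {X : Set ℂ}
    (hX : IsCompact X) (x₀ : ℂ) {f : ℂ → ℂ} (hf : MemLp f p (μ.restrict X)) :
    MemLp (fun z => (z - x₀) * f z) p (μ.restrict X) := by
  obtain ⟨R, hR⟩ :=
    hX.exists_bound_of_continuousOn (continuous_id.sub continuous_const).continuousOn
  refine hf.of_le_mul (c := R) ((by fun_prop : AEStronglyMeasurable (· - x₀) _).mul hf.1) ?_
  refine ae_restrict_of_forall_mem hX.measurableSet fun z hz => ?_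
  rw [norm_mul]
  exact mul_le_mul_of_nonneg_right (hR z hz) (norm_nonneg _)

lemma norm_integral_mul_le_eLpNorm_mul_eLpNorm {α 𝕜 : Type*} [MeasurableSpace α] [RCLike 𝕜]
    {μ : Measure α} {p q : ENNReal} [p.HolderConjugate q] {f g : α → 𝕜}
    (hf : MemLp f p μ) (hg : MemLp g q μ) :
    ‖∫ a, f a * g a ∂μ‖ ≤ (eLpNorm f p μ).toReal * (eLpNorm g q μ).toReal := by
  calc ‖∫ a, f a * g a ∂μ‖ ≤ ∫ a, ‖f a * g a‖ ∂μ := norm_integral_le_integral_norm _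
    _ = (eLpNorm (f • g) 1 μ).toReal := by
      rw [integral_norm_eq_lintegral_enorm (f := fun a => f a * g a) (hf.1.mul hg.1),
        eLpNorm_one_eq_lintegral_enorm]
      simp only [smul_eq_mul, Pi.mul_apply]
    _ ≤ (eLpNorm f p μ * eLpNorm g q μ).toReal :=
      ENNReal.toReal_mono (ENNReal.mul_ne_top hf.eLpNorm_ne_top hg.eLpNorm_ne_top)
        (eLpNorm_smul_le_mul_eLpNorm hg.1 hf.1)
    _ = (eLpNorm f p μ).toReal * (eLpNorm g q μ).toReal := ENNReal.toReal_mul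

section CauchyKernel

variable {μ : Measure ℂ} [NullSingletonClass μ] {x x₀ : ℂ}

lemma integral_sub_mul_div_sub {u : ℂ → ℂ} (hu : Integrable u μ)
    (hv : Integrable (fun z => (x - x₀) * u z / (z - x)) μ) :
    ∫ z, (z - x₀) * u z / (z - x) ∂μ = ∫ z, u z ∂μ + ∫ z, (x - x₀) * u z / (z - x) ∂μ := by
  rw [← integral_add hu hv]
  exact integral_congr_ae ((Measure.ae_ne μ x).mono fun z hz => sub_mul_div_sub_of_ne hz (u z))

lemma norm_integral_sub_mul_div_sub_sub_integral_le {u : ℂ → ℂ} (hu : Integrable u μ)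
    (hv : Integrable (fun z => (x - x₀) * u z / (z - x)) μ) :
    ‖∫ z, (z - x₀) * u z / (z - x) ∂μ - ∫ z, u z ∂μ‖ ≤ ‖x - x₀‖ * ∫ z, ‖u z‖ / ‖z - x‖ ∂μ := by
  rw [integral_sub_mul_div_sub hu hv, add_sub_cancel_left, ← integral_const_mul]
  refine (norm_integral_le_integral_norm _).trans_eq (integral_congr_ae (.of_forall fun z => ?_))
  simp only [norm_div, norm_mul, mul_div_assoc]

lemma integral_mul_sub_mul_div_sub_of_integral_eq_zero {G k : ℂ → ℂ}
    (hGk : Integrable (fun z => G z * k z) μ)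
    (hGwk : Integrable (fun z => G z * ((z - x₀) * k z)) μ)
    (hGh : Integrable (fun z => G z * ((x - x₀) * k z / (z - x))) μ)
    (hGwh : Integrable (fun z => G z * ((z - x₀) * ((x - x₀) * k z / (z - x)))) μ)
    (hGwk0 : ∫ z, G z * ((z - x₀) * k z) ∂μ = 0) (hGk0 : ∫ z, G z * k z ∂μ = 0) :
    ∫ z, G z * ((z - x₀) * ((z - x₀) * k z) / (z - x)) ∂μ =
      (x - x₀) * ∫ z, G z * ((x - x₀) * k z / (z - x)) ∂μ := by
  calc ∫ z, G z * ((z - x₀) * ((z - x₀) * k z) / (z - x)) ∂μ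
      = ∫ z, (z - x₀) * (G z * ((z - x₀) * k z)) / (z - x) ∂μ := by
        congr 1; ext z; ring
    _ = ∫ z, (z - x₀) * ((x - x₀) * (G z * k z)) / (z - x) ∂μ := by
        rw [integral_sub_mul_div_sub hGwk (hGwh.congr (.of_forall fun z => by ring)), hGwk0,
          zero_add]
        congr 1; ext z; ring
    _ = (x - x₀) * ∫ z, G z * ((x - x₀) * k z / (z - x)) ∂μ := by
        rw [integral_sub_mul_div_sub (hGk.const_mul _)
          ((hGh.const_mul (x - x₀)).congr (.of_forall fun z => by ring)), integral_const_mul,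
          hGk0, mul_zero, zero_add, ← integral_const_mul]
        congr 1; ext z; ring

end CauchyKernel

theorem first_order_difference_estimate_general
    (X : Set ℂ) (hX : IsCompact X) (p q : ℝ) (hp : 2 < p) (hq : q = p / (p - 1))
    (x₀ : ℂ) (δ₀ : ℝ) (hδ₀1 : δ₀ < 1)
    (k₁ : ℂ → ℂ) (hk0 : ∀ z ∉ X, k₁ z = 0)
    (hkLq : MemLp k₁ (ENNReal.ofReal q) (volume.restrict X))
    (hrep : ∀ f : ℂ → ℂ, RatFn X f → ∫ z in X, f z * k₁ z = deriv f x₀)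
    (x : ℂ)
    (hx1 : eLpNorm (fun z => (x - x₀) * k₁ z / (z - x)) (ENNReal.ofReal q)
        (volume.restrict X) ≤ ENNReal.ofReal δ₀)
    (hx2 : ‖x - x₀‖ * (∫ z, ‖(z - x₀) * k₁ z‖ / ‖z - x‖) < δ₀)
    (c : ℂ) (hc : c = ∫ z, (z - x₀) * ((z - x₀) * k₁ z) / (z - x)) :
    ∀ G : ℂ → ℂ, MemLp G (ENNReal.ofReal p) (volume.restrict X) →
      (∫ z in X, G z * ((z - x₀) * k₁ z)) = 0 →
      (∫ z in X, G z * k₁ z) = 0 →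
      ‖(1 / c) * ∫ z in X, G z * ((z - x₀) * ((z - x₀) * k₁ z) / (z - x))‖ ≤
        (δ₀ / (1 - δ₀)) * ‖x - x₀‖ *
          (eLpNorm G (ENNReal.ofReal p) (volume.restrict X)).toReal := by
  intro G hG hGwk0 hGk0
  have hpq : p.HolderConjugate q := (Real.holderConjugate_iff_eq_conjExponent (by linarith)).2 hq
  have := hpq.ennrealOfReal
  have : IsFiniteMeasure (volume.restrict X) := isFiniteMeasure_restrict.2 hX.measure_lt_top.ne
  have hq1 : 1 ≤ ENNReal.ofReal q := ENNReal.one_le_ofReal.2 hpq.symm.lt.le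
  have hδ₀ : 0 ≤ δ₀ :=
    (mul_nonneg (norm_nonneg _) (integral_nonneg fun _ => by positivity)).trans hx2.le
  have hh : MemLp (fun z => (x - x₀) * k₁ z / (z - x)) (ENNReal.ofReal q) (volume.restrict X) :=
    ⟨(hkLq.1.const_mul _).mul (measurable_id.sub_const x).inv.aestronglyMeasurable,
      hx1.trans_lt ENNReal.ofReal_lt_top⟩
  have hwk := hkLq.sub_mul_of_isCompact hX x₀
  have hwh := hh.sub_mul_of_isCompact hX x₀
  have hnum := integral_mul_sub_mul_div_sub_of_integral_eq_zero (hG.integrable_mul hkLq)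
    (hG.integrable_mul hwk) (hG.integrable_mul hh) (hG.integrable_mul hwh) hGwk0 hGk0
  have hc1 : ‖c - 1‖ < δ₀ := by
    have hone : ∫ z in X, (z - x₀) * k₁ z = 1 := by simpa using hrep _ (ratFn_sub_const X x₀)
    rw [hc, ← setIntegral_eq_integral_of_forall_compl_eq_zero fun z hz => by simp [hk0 z hz],
      ← hone]
    refine (norm_integral_sub_mul_div_sub_sub_integral_le (hwk.integrable hq1)
      ((hwh.integrable hq1).congr (.of_forall fun z => by ring))).trans_lt ?_
    rwa [setIntegral_eq_integral_of_forall_compl_eq_zero fun z hz => by simp [hk0 z hz]]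
  have hGh : ‖∫ z in X, G z * ((x - x₀) * k₁ z / (z - x))‖ ≤
      (eLpNorm G (ENNReal.ofReal p) (volume.restrict X)).toReal * δ₀ :=
    (norm_integral_mul_le_eLpNorm_mul_eLpNorm hG hh).trans
      (mul_le_mul_of_nonneg_left (ENNReal.toReal_le_of_le_ofReal hδ₀ hx1) ENNReal.toReal_nonneg)
  have hc_lower : 1 - δ₀ ≤ ‖c‖ := by
    linarith [norm_sub_norm_le (1 : ℂ) c, norm_one (α := ℂ), norm_sub_rev (1 : ℂ) c]
  rw [hnum, norm_mul, norm_mul, one_div, norm_inv]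
  calc ‖c‖⁻¹ * (‖x - x₀‖ * ‖∫ z in X, G z * ((x - x₀) * k₁ z / (z - x))‖)
      ≤ (1 - δ₀)⁻¹ *
          (‖x - x₀‖ * ((eLpNorm G (ENNReal.ofReal p) (volume.restrict X)).toReal * δ₀)) := by
        gcongr
    _ = _ := by ring

/-- Key estimate for Theorem 1: if `k₁ ∈ L^q(X, dA)` represents a first-order bounded
point derivation at `x₀` on `R^p(X)` (`2 < p < ∞`), `k(z) = (z-x₀)k₁(z)`, and `x`
satisfies `‖(x-x₀)k₁(z)/(z-x)‖_q ≤ δ₀` and `|x-x₀| k̃(x) < δ₀` with `0 < δ₀ < 1`, then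
with `c = ∫ (z-x₀)k(z)/(z-x) dA_z`, every `G ∈ L^p(X, dA)` annihilated by both `k dA`
and `k₁ dA` satisfies
`|(1/c) ∫_X G(z)(z-x₀)k(z)/(z-x) dA_z| ≤ (δ₀/(1-δ₀)) |x-x₀| ‖G‖_p`. -/
theorem first_order_difference_estimate
    (X : Set ℂ) (hX : IsCompact X) (p q : ℝ) (hp : 2 < p) (hq : q = p / (p - 1))
    (x₀ : ℂ) (hx₀ : x₀ ∈ X) (δ₀ : ℝ) (hδ₀ : 0 < δ₀) (hδ₀1 : δ₀ < 1)
    (k₁ : ℂ → ℂ) (hk0 : ∀ z ∉ X, k₁ z = 0)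
    (hkLq : MemLp k₁ (ENNReal.ofReal q) (volume.restrict X))
    (hrep : ∀ f : ℂ → ℂ, RatFn X f → ∫ z in X, f z * k₁ z = deriv f x₀)
    (x : ℂ)
    (hx1 : eLpNorm (fun z => (x - x₀) * k₁ z / (z - x)) (ENNReal.ofReal q)
        (volume.restrict X) ≤ ENNReal.ofReal δ₀)
    (hx2 : ‖x - x₀‖ * (∫ z, ‖(z - x₀) * k₁ z‖ / ‖z - x‖) < δ₀)
    (c : ℂ) (hc : c = ∫ z, (z - x₀) * ((z - x₀) * k₁ z) / (z - x)) :
    ∀ G : ℂ → ℂ, MemLp G (ENNReal.ofReal p) (volume.restrict X) →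
      (∫ z in X, G z * ((z - x₀) * k₁ z)) = 0 →
      (∫ z in X, G z * k₁ z) = 0 →
      ‖(1 / c) * ∫ z in X, G z * ((z - x₀) * ((z - x₀) * k₁ z) / (z - x))‖ ≤
        (δ₀ / (1 - δ₀)) * ‖x - x₀‖ *
          (eLpNorm G (ENNReal.ofReal p) (volume.restrict X)).toReal :=
  first_order_difference_estimate_general X hX p q hp hq x₀ δ₀ hδ₀1 k₁ hk0 hkLq hrep x hx1 hx2 c hc
end
end
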